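/- arXiv:2406.09584 — 5 statements merged into one kernel-verified Lean document; each statement's English description precedes it below -/
import Mathlib

section
/- For every integer n ≥ 3, the complete graph K_n satisfies s(K_n) = 3. -/
open Finset

open scoped Classical in
/-- The weighted degree of a vertex `v` of `G` under an edge weighting `ω`:
`σ_ω(v) = Σ_{u ∈ N(v)} ω(uv)`. -/
noncomputable def SimpleGraph.wdeg {V : Type*} [Fintype V] (G : SimpleGraph V)
    (ω : Sym2 V → ℕ) (v : V) : ℕ :=
  ∑ u ∈ Finset.univ.filter (fun u => G.Adj v u), ω s(v, u)

/-- `G` admits a `k`-weighting (weights in `{1,…,k}` on edges) under which all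
vertices get pairwise distinct weighted degrees. -/
def SimpleGraph.IrregWith {V : Type*} [Fintype V] (G : SimpleGraph V) (k : ℕ) : Prop :=
  ∃ ω : Sym2 V → ℕ, (∀ e ∈ G.edgeSet, 1 ≤ ω e ∧ ω e ≤ k) ∧
    Function.Injective (G.wdeg ω)

/-- The irregularity strength `s(G)` as an extended natural number: the least positive
integer `k` admitting an irregular `k`-weighting, and `+∞` if no such `k` exists. -/
noncomputable def SimpleGraph.strength {V : Type*} [Fintype V] (G : SimpleGraph V) : ℕ∞ :=
  sInf {k : ℕ∞ | ∃ m : ℕ, k = (m : ℕ∞) ∧ 1 ≤ m ∧ G.IrregWith m}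

lemma wdeg_complete {V : Type*} [Fintype V] [DecidableEq V] (ω : Sym2 V → ℕ) (v : V) :
    (SimpleGraph.completeGraph V).wdeg ω v = ∑ u ∈ Finset.univ.erase v, ω s(v, u) := by
  unfold SimpleGraph.wdeg
  congr 1
  ext u
  simp [SimpleGraph.completeGraph, eq_comm]

/-- the weight function with threshold t -/
def fw (t x : ℕ) : ℕ := if x < t then 1 else if x = t then 2 else 3

lemma fw_le (t a b : ℕ) (h : a ≤ b) : fw t a ≤ fw t b := by
  unfold fw; split_ifs <;> omega

lemma fw_lt (t x : ℕ) (hx : x + 1 = t ∨ x = t) : fw t x < fw t (x + 1) := by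
  unfold fw; split_ifs <;> omega

noncomputable def om (n : ℕ) : Sym2 (Fin n) → ℕ :=
  Sym2.lift ⟨fun a b => fw (2 * (n / 2)) (a.val + b.val),
    fun a b => by dsimp only; rw [Nat.add_comm]⟩

lemma om_apply {n : ℕ} (a b : Fin n) : om n s(a, b) = fw (2 * (n / 2)) (a.val + b.val) := rfl

lemma key_step (n : ℕ) (hn : 3 ≤ n) (i : ℕ) (hi : i + 1 < n) :
    (SimpleGraph.completeGraph (Fin n)).wdeg (om n) ⟨i, by omega⟩ <
      (SimpleGraph.completeGraph (Fin n)).wdeg (om n) ⟨i + 1, hi⟩ := by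
  classical
  set t := 2 * (n / 2) with ht
  set a : Fin n := ⟨i, by omega⟩
  set b : Fin n := ⟨i + 1, hi⟩
  have hab : a ≠ b := by simp [a, b, Fin.ext_iff]
  rw [wdeg_complete, wdeg_complete]
  have hbe : b ∈ Finset.univ.erase a := by simp [hab.symm]
  have hae : a ∈ Finset.univ.erase b := by simp [hab]
  rw [← Finset.insert_erase hbe, ← Finset.insert_erase hae,
    Finset.sum_insert (Finset.notMem_erase _ _),
    Finset.sum_insert (Finset.notMem_erase _ _)]
  have hScomm : (Finset.univ.erase a).erase b = (Finset.univ.erase b).erase a :=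
    Finset.erase_right_comm
  rw [hScomm]
  have hcross : om n s(a, b) = om n s(b, a) := by rw [Sym2.eq_swap]
  rw [hcross]
  have hsum : ∑ u ∈ (Finset.univ.erase b).erase a, om n s(a, u) <
      ∑ u ∈ (Finset.univ.erase b).erase a, om n s(b, u) := by
    apply Finset.sum_lt_sum
    · intro u _
      rw [om_apply, om_apply]
      exact fw_le _ _ _ (by simp only [a, b]; omega)
    · -- witness
      have hteq : t = 2 * (n / 2) := ht
      by_cases hc : 2 * i + 2 = t
      · refine ⟨⟨i + 2, by omega⟩, ?_, ?_⟩
        · simp [a, b, Fin.ext_iff]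
        · simp only [om_apply, a, b]
          have h1 : i + (i + 2) = t := by omega
          have h2 : i + 1 + (i + 2) = t + 1 := by omega
          rw [h1, h2]
          exact fw_lt t t (Or.inr rfl)
      · refine ⟨⟨t - 1 - i, by omega⟩, ?_, ?_⟩
        · simp [a, b, Fin.ext_iff]
          constructor <;> omega
        · simp only [om_apply, a, b]
          have h1 : i + (t - 1 - i) = t - 1 := by omega
          have h2 : i + 1 + (t - 1 - i) = t := by omega
          rw [h1, h2]
          have := fw_lt t (t - 1) (Or.inl (by omega))
          have h3 : t - 1 + 1 = t := by omega
          rwa [h3] at this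
  omega

lemma irreg3 (n : ℕ) (hn : 3 ≤ n) : ∃ ω : Sym2 (Fin n) → ℕ,
    (∀ e, 1 ≤ ω e ∧ ω e ≤ 3) ∧
    Function.Injective ((SimpleGraph.completeGraph (Fin n)).wdeg ω) := by
  refine ⟨om n, ?_, ?_⟩
  · intro e
    induction e using Sym2.ind with
    | _ a b => rw [om_apply]; unfold fw; split_ifs <;> omega
  · obtain ⟨m, rfl⟩ : ∃ m, n = m + 1 := ⟨n - 1, by omega⟩
    have : StrictMono ((SimpleGraph.completeGraph (Fin (m + 1))).wdeg (om (m + 1))) := by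
      rw [Fin.strictMono_iff_lt_succ]
      intro i
      have := key_step (m + 1) hn i.val (by omega)
      convert this using 2
      · rfl
      · simp [Fin.ext_iff]
      · simp [Fin.ext_iff]
    exact this.injective

lemma no_two (n : ℕ) (hn : 3 ≤ n) (ω : Sym2 (Fin n) → ℕ)
    (hω : ∀ e ∈ (SimpleGraph.completeGraph (Fin n)).edgeSet, 1 ≤ ω e ∧ ω e ≤ 2) :
    ¬ Function.Injective ((SimpleGraph.completeGraph (Fin n)).wdeg ω) := by
  intro hinj
  have hedge : ∀ a b : Fin n, a ≠ b → 1 ≤ ω s(a, b) ∧ ω s(a, b) ≤ 2 := by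
    intro a b hab
    exact hω _ (by simp [SimpleGraph.mem_edgeSet, SimpleGraph.completeGraph, hab])
  have hcard : ∀ v : Fin n, (Finset.univ.erase v).card = n - 1 := by
    intro v; rw [Finset.card_erase_of_mem (Finset.mem_univ v), Finset.card_univ, Fintype.card_fin]
  have hlb : ∀ v, n - 1 ≤ (SimpleGraph.completeGraph (Fin n)).wdeg ω v := by
    intro v
    rw [wdeg_complete]
    calc n - 1 = ∑ _u ∈ Finset.univ.erase v, 1 := by rw [Finset.sum_const, hcard, smul_eq_mul]; omega
    _ ≤ _ := Finset.sum_le_sum (fun u hu => (hedge v u (by rintro rfl; simp at hu)).1)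
  have hub : ∀ v, (SimpleGraph.completeGraph (Fin n)).wdeg ω v ≤ 2 * (n - 1) := by
    intro v
    rw [wdeg_complete]
    calc ∑ u ∈ Finset.univ.erase v, ω s(v, u) ≤ ∑ _u ∈ Finset.univ.erase v, 2 :=
      Finset.sum_le_sum (fun u hu => (hedge v u (by rintro rfl; simp at hu)).2)
    _ = 2 * (n - 1) := by rw [Finset.sum_const, hcard, smul_eq_mul]; omega
  set D := Finset.univ.image ((SimpleGraph.completeGraph (Fin n)).wdeg ω) with hD
  have hDcard : D.card = n := by
    rw [hD, Finset.card_image_of_injective _ hinj, Finset.card_univ, Fintype.card_fin]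
  have hDsub : D ⊆ Finset.Icc (n - 1) (2 * (n - 1)) := by
    intro x hx
    simp only [hD, Finset.mem_image] at hx
    obtain ⟨v, _, rfl⟩ := hx
    exact Finset.mem_Icc.2 ⟨hlb v, hub v⟩
  have hDeq : D = Finset.Icc (n - 1) (2 * (n - 1)) := by
    apply Finset.eq_of_subset_of_card_le hDsub
    rw [hDcard, Nat.card_Icc]; omega
  have hmin : n - 1 ∈ D := by rw [hDeq]; exact Finset.mem_Icc.2 ⟨le_refl _, by omega⟩
  have hmax : 2 * (n - 1) ∈ D := by rw [hDeq]; exact Finset.mem_Icc.2 ⟨by omega, le_refl _⟩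
  simp only [hD, Finset.mem_image] at hmin hmax
  obtain ⟨A, -, hA⟩ := hmin
  obtain ⟨B, -, hB⟩ := hmax
  have hABne : A ≠ B := by rintro rfl; omega
  -- ω s(A,B) = 1
  have h1 : ω s(A, B) ≤ 1 := by
    by_contra h
    push_neg at h
    have hBe : B ∈ Finset.univ.erase A := by simp [hABne.symm]
    have : ∑ _u ∈ Finset.univ.erase A, 1 < ∑ u ∈ Finset.univ.erase A, ω s(A, u) :=
      Finset.sum_lt_sum (fun u hu => (hedge A u (by rintro rfl; simp at hu)).1) ⟨B, hBe, h⟩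
    rw [Finset.sum_const, smul_eq_mul, hcard, ← wdeg_complete, hA] at this
    omega
  have h2 : 2 ≤ ω s(B, A) := by
    by_contra h
    push_neg at h
    have hAe : A ∈ Finset.univ.erase B := by simp [hABne]
    have : ∑ u ∈ Finset.univ.erase B, ω s(B, u) < ∑ _u ∈ Finset.univ.erase B, 2 :=
      Finset.sum_lt_sum (fun u hu => (hedge B u (by rintro rfl; simp at hu)).2) ⟨A, hAe, h⟩
    rw [Finset.sum_const, smul_eq_mul, hcard, ← wdeg_complete, hB] at this
    omega
  rw [Sym2.eq_swap] at h1
  omega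

/-- Chartrand et al.. For every integer `n ≥ 3`, the complete graph `K_n`
satisfies `s(K_n) = 3`. -/
theorem stmt6 (n : ℕ) (hn : 3 ≤ n) :
    (SimpleGraph.completeGraph (Fin n)).strength = (3 : ℕ∞) := by
  unfold SimpleGraph.strength
  apply le_antisymm
  · apply sInf_le
    obtain ⟨ω, hω, hinj⟩ := irreg3 n hn
    exact ⟨3, rfl, by norm_num, ω, fun e _ => hω e, hinj⟩
  · apply le_sInf
    rintro x ⟨m, rfl, hm1, ω, hω, hinj⟩
    by_contra h
    push_neg at h
    have hm3 : m < 3 := by exact_mod_cast h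
    exact no_two n hn ω (fun e he => ⟨(hω e he).1, le_trans (hω e he).2 (by omega)⟩) hinj
end

section
/- For every integer K ≥ 3 and every integer N there exist an integer n ≥ N, an integer d ≥ 2 with n = d(K−1) + 2, and a d-regular finite simple graph G on n vertices such that s(G) > K; in particular, δ(G) = (n−2)/(K−1) = (1/(K−1) − 2/((K−1)n))·n. Hence the lower bound on the minimum degree in the dense-graph theorem (s(G) ≤ K whenever δ(G) ≥ (1/(K−1) + o(1))·n) is asymptotically optimal. -/
open Finset

lemma reg_any {V : Type*} (G : SimpleGraph V) (d : ℕ)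
    (i1 i2 : ∀ v, Fintype (G.neighborSet v))
    (h : ∀ v, @SimpleGraph.degree V G v (i1 v) = d) :
    ∀ v, @SimpleGraph.degree V G v (i2 v) = d := by
  intro v
  rw [← h v]
  congr!

-- auxiliary: regularity of the circulant graph with jumps {1,...,h}
lemma circ_regular (n h : ℕ) [NeZero n] (h1 : 1 ≤ h) (hn : 2 * h + 1 ≤ n) :
    (SimpleGraph.circulantGraph {x : Fin n | 1 ≤ x.val ∧ x.val ≤ h}).IsRegularOfDegree (2 * h) := by
  classical
  intro v
  rw [SimpleGraph.degree, SimpleGraph.neighborFinset_eq_filter]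
  have hcard : (Finset.Icc 1 h ∪ Finset.Icc (n - h) (n - 1)).card = 2 * h := by
    rw [Finset.card_union_of_disjoint, Nat.card_Icc, Nat.card_Icc]
    · omega
    · rw [Finset.disjoint_left]
      intro a ha hb
      simp only [Finset.mem_Icc] at ha hb
      omega
  rw [← hcard]
  apply Finset.card_bij (fun u _ => (u - v).val)
  · intro u hu
    simp only [Finset.mem_filter, Finset.mem_univ, true_and,
      SimpleGraph.circulantGraph_adj, Set.mem_setOf_eq] at hu
    obtain ⟨hne, hor⟩ := hu
    have hval : (u - v).val < n := (u - v).isLt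
    have hvu : (v - u) = -(u - v) := by abel
    rcases hor with h' | h'
    · -- v - u ∈ S
      rw [hvu, Fin.coe_neg] at h'
      have hne0 : (u - v).val ≠ 0 := by
        intro h0
        apply hne
        have : u - v = 0 := Fin.ext (by simpa using h0)
        have := sub_eq_zero.mp this
        exact this.symm
      simp only [Finset.mem_union, Finset.mem_Icc]
      right
      have := Nat.mod_eq_of_lt (show n - (u-v).val < n by omega)
      omega
    · simp only [Finset.mem_union, Finset.mem_Icc]
      left
      exact h'
  · intro a ha b hb hab
    have : a - v = b - v := Fin.ext hab
    simpa using sub_left_injective this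
  · intro m hm
    simp only [Finset.mem_union, Finset.mem_Icc] at hm
    set x : Fin n := ⟨m, by omega⟩ with hx
    have hxval : x.val = m := rfl
    refine ⟨v + x, ?_, by simp [hxval]⟩
    simp only [Finset.mem_filter, Finset.mem_univ, true_and,
      SimpleGraph.circulantGraph_adj, Set.mem_setOf_eq]
    have hsub : v + x - v = x := by abel
    constructor
    · intro h
      have := congrArg (· - v) h
      rw [hsub] at this
      have : m = 0 := by simpa [Fin.ext_iff, hxval] using this.symm
      omega
    · rcases hm with h' | h'
      · right; rw [hsub]; simpa [hxval] using h'
      · left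
        have hvx : v - (v + x) = -x := by abel
        rw [hvx]
        have hneg : ((-x : Fin n)).val = n - m := by
          rw [Fin.coe_neg, hxval]
          exact Nat.mod_eq_of_lt (by omega)
        rw [hneg]
        omega

open scoped Classical in
lemma no_irreg {n d K : ℕ} (hd : 1 ≤ d) (hK : 1 ≤ K) (hn : n = d * (K - 1) + 2)
    (G : SimpleGraph (Fin n)) (hreg : G.IsRegularOfDegree d)
    {m : ℕ} (hm : m ≤ K) : ¬ G.IrregWith m := by
  rintro ⟨ω, hb, hinj⟩
  have hcard : ∀ v : Fin n, (Finset.univ.filter (fun u => G.Adj v u)).card = d := by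
    intro v
    have := hreg v
    rwa [SimpleGraph.degree, SimpleGraph.neighborFinset_eq_filter] at this
  have hmem : ∀ v : Fin n, G.wdeg ω v ∈ Finset.Icc d (K * d) := by
    intro v
    have h1 := Finset.card_nsmul_le_sum (Finset.univ.filter (fun u => G.Adj v u))
      (fun u => ω s(v, u)) 1 (fun u hu => by
        simp only [Finset.mem_filter, Finset.mem_univ, true_and] at hu
        exact (hb _ ((G.mem_edgeSet).mpr hu)).1)
    have h2 := Finset.sum_le_card_nsmul (Finset.univ.filter (fun u => G.Adj v u))
      (fun u => ω s(v, u)) m (fun u hu => by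
        simp only [Finset.mem_filter, Finset.mem_univ, true_and] at hu
        exact (hb _ ((G.mem_edgeSet).mpr hu)).2)
    rw [hcard v, smul_eq_mul] at h1 h2
    have hdm : d * m ≤ K * d := by
      calc d * m ≤ d * K := Nat.mul_le_mul_left d hm
        _ = K * d := mul_comm d K
    rw [Finset.mem_Icc]
    exact ⟨by simpa [SimpleGraph.wdeg] using h1, le_trans (by simpa [SimpleGraph.wdeg] using h2) hdm⟩
  have hle : Fintype.card (Fin n) ≤ (Finset.Icc d (K * d)).card := by
    rw [← Finset.card_univ]
    exact Finset.card_le_card_of_injOn (G.wdeg ω) (fun v _ => hmem v)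
      (fun a _ b _ h => hinj h)
  rw [Fintype.card_fin, Nat.card_Icc] at hle
  obtain ⟨K', rfl⟩ : ∃ K', K = K' + 1 := ⟨K - 1, by omega⟩
  have hq : (K' + 1) * d = d * K' + d := by ring
  rw [hq] at hle
  simp only [Nat.add_sub_cancel] at hn
  omega

open scoped Classical in
lemma strength_gt {n d K : ℕ} (hd : 1 ≤ d) (hK : 1 ≤ K) (hn : n = d * (K - 1) + 2)
    (G : SimpleGraph (Fin n)) (hreg : G.IsRegularOfDegree d) :
    (K : ℕ∞) < G.strength := by
  have h1 : (((K + 1 : ℕ)) : ℕ∞) ≤ G.strength := by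
    apply le_sInf
    rintro x ⟨m, rfl, hm1, hmirr⟩
    have : K < m := by
      by_contra h
      exact no_irreg hd hK hn G hreg (not_lt.mp h) hmirr
    exact_mod_cast this
  exact lt_of_lt_of_le (by exact_mod_cast Nat.lt_succ_self K) h1

open scoped Classical in
/-- For every integer `K ≥ 3` and every integer `N` there exist `n ≥ N` and
`d ≥ 2` with `n = d(K−1) + 2` and a `d`-regular finite simple graph `G` on `n` vertices such
that `s(G) > K`; in particular (the graph being `d`-regular) its minimum degree equals
`d = (n−2)/(K−1)`. Hence the lower bound on the minimum degree in the dense-graph theorem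
is asymptotically optimal. -/
theorem stmt9 (K : ℕ) (hK : 3 ≤ K) (N : ℕ) :
    ∃ (n d : ℕ), N ≤ n ∧ 2 ≤ d ∧ n = d * (K - 1) + 2 ∧
      ∃ G : SimpleGraph (Fin n),
        G.IsRegularOfDegree d ∧ d = (n - 2) / (K - 1) ∧ (K : ℕ∞) < G.strength := by
  obtain ⟨h, h1, hN⟩ : ∃ h, 1 ≤ h ∧ N ≤ h := ⟨max 1 N, le_max_left _ _, le_max_right _ _⟩
  have hK2 : 2 ≤ K - 1 := by omega
  have hmul : 2 * h * 2 ≤ 2 * h * (K - 1) := Nat.mul_le_mul_left (2 * h) hK2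
  haveI : NeZero (2 * h * (K - 1) + 2) := ⟨by omega⟩
  have hreg0 := circ_regular (2 * h * (K - 1) + 2) h h1 (by omega)
  set G : SimpleGraph (Fin (2 * h * (K - 1) + 2)) :=
    SimpleGraph.circulantGraph {x : Fin (2 * h * (K - 1) + 2) | 1 ≤ x.val ∧ x.val ≤ h} with hG
  refine ⟨2 * h * (K - 1) + 2, 2 * h, by omega, by omega, rfl, G, ?_, ?_, ?_⟩
  · exact (by intro v; convert hreg0 v)
  · have he : 2 * h * (K - 1) + 2 - 2 = 2 * h * (K - 1) := by omega
    rw [he, Nat.mul_div_cancel _ (show 0 < K - 1 by omega)]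
  · exact strength_gt (by omega) (by omega) rfl G (by intro v; convert hreg0 v)
end

section
/- Every finite simple graph G of order n with minimum degree δ(G) ≥ 10·n^{3/4}·(ln n)^{1/4} satisfies s(G) ≤ 48·n/δ(G) + 6. -/
open Finset


namespace Stmt11
open SimpleGraph

variable {V : Type*} [Fintype V] [DecidableEq V] (G : SimpleGraph V) [DecidableRel G.Adj]

/-- integer-valued weighted degree -/
noncomputable def sig (ω : Sym2 V → ℤ) (v : V) : ℤ :=
  ∑ u ∈ G.neighborFinset v, ω s(v, u)

noncomputable def repOf (v : V) : V := Quot.out (G.connectedComponentMk v)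

noncomputable def mu (v : V) : ℕ := G.dist v (repOf G v)

omit [Fintype V] [DecidableEq V] [DecidableRel G.Adj] in
lemma repOf_adj {u v : V} (h : G.Adj u v) : repOf G u = repOf G v := by
  unfold repOf
  congr 1
  exact ConnectedComponent.sound h.reachable

omit [Fintype V] [DecidableEq V] [DecidableRel G.Adj] in
lemma reachable_repOf (v : V) : G.Reachable v (repOf G v) := by
  have : G.connectedComponentMk (repOf G v) = G.connectedComponentMk v := Quot.out_eq _
  exact (ConnectedComponent.eq.mp this).symm

omit [Fintype V] [DecidableEq V] [DecidableRel G.Adj] in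
lemma exists_adj_mu_lt {v : V} (h : v ≠ repOf G v) : ∃ u, G.Adj v u ∧ mu G u < mu G v := by
  have hreach := reachable_repOf G v
  have hpos : 0 < mu G v := by
    rcases Nat.eq_zero_or_pos (mu G v) with h0 | h0
    · exfalso
      rcases (SimpleGraph.dist_eq_zero_iff_eq_or_not_reachable).mp h0 with h1 | h1
      · exact h h1
      · exact h1 hreach
    · exact h0
  obtain ⟨p, hp⟩ := hreach.exists_walk_length_eq_dist
  have hrepfix : ∀ u, G.Adj v u → repOf G u = repOf G v := fun u hu => repOf_adj G hu.symm
  revert hp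
  generalize hr : repOf G v = r at hpos hreach hrepfix p ⊢
  intro hp
  cases p with
  | nil =>
    exfalso
    unfold mu at hpos
    rw [hr] at hpos
    simp [SimpleGraph.dist_self] at hpos
  | cons hadj q =>
    rename_i u
    refine ⟨u, hadj, ?_⟩
    have : G.dist u r ≤ q.length := SimpleGraph.dist_le q
    have hlen : q.length + 1 = G.dist v r := by simpa using hp
    unfold mu
    rw [hrepfix u hadj, hr]
    omega

noncomputable def roots : Finset V := univ.filter (fun v => v = repOf G v)

lemma roots_card_bound (δ : ℕ) (hδ : ∀ v, δ ≤ G.degree v) :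
    (roots G).card * (δ + 1) ≤ Fintype.card V := by
  classical
  have hrep : ∀ r ∈ roots G, ∀ y ∈ insert r (G.neighborFinset r), repOf G y = r := by
    intro r hr y hy
    rcases Finset.mem_insert.mp hy with rfl | hy
    · exact ((Finset.mem_filter.mp hr).2).symm
    · rw [SimpleGraph.mem_neighborFinset] at hy
      rw [repOf_adj G hy.symm]
      exact ((Finset.mem_filter.mp hr).2).symm
  have hdisj : ∀ r₁ ∈ roots G, ∀ r₂ ∈ roots G, r₁ ≠ r₂ →
      Disjoint (insert r₁ (G.neighborFinset r₁)) (insert r₂ (G.neighborFinset r₂)) := by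
    intro r₁ h₁ r₂ h₂ hne
    rw [Finset.disjoint_left]
    intro x hx1 hx2
    have e1 := hrep r₁ h₁ x hx1
    have e2 := hrep r₂ h₂ x hx2
    exact hne (e1 ▸ e2 ▸ rfl)
  calc (roots G).card * (δ + 1) = (roots G).card • (δ + 1) := by simp
    _ ≤ ∑ r ∈ roots G, (insert r (G.neighborFinset r)).card := by
        apply Finset.card_nsmul_le_sum
        intro r _
        have : (G.neighborFinset r).card + 1 ≤ (insert r (G.neighborFinset r)).card := by
          rw [Finset.card_insert_of_notMem (by simp)]
        have hd : δ ≤ (G.neighborFinset r).card := by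
          rw [SimpleGraph.card_neighborFinset_eq_degree]; exact hδ r
        omega
    _ = ((roots G).biUnion (fun r => insert r (G.neighborFinset r))).card :=
        (Finset.card_biUnion hdisj).symm
    _ ≤ Fintype.card V := by
        rw [← Finset.card_univ]
        exact Finset.card_le_card (Finset.subset_univ _)

/-- residues -/
noncomputable def rho (k : ℕ) (v : V) : ℤ := ((Fintype.equivFin V v : ℕ) % k : ℕ)

lemma rho_class_card (k : ℕ) (hk : 0 < k) (c : ℤ) :
    (univ.filter (fun u : V => rho k u = c)).card ≤ Fintype.card V / k + 1 := by
  classical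
  rw [← Finset.card_range (Fintype.card V / k + 1)]
  apply Finset.card_le_card_of_injOn (fun u => (Fintype.equivFin V u : ℕ) / k)
  · intro u hu
    simp only [Finset.mem_coe, Finset.mem_range]
    have h1 : (Fintype.equivFin V u : ℕ) < Fintype.card V := (Fintype.equivFin V u).2
    have h2 : (Fintype.equivFin V u : ℕ) / k ≤ Fintype.card V / k :=
      Nat.div_le_div_right h1.le
    omega
  · intro u hu w hw he
    dsimp only at he
    simp only [Finset.mem_coe, Finset.mem_filter] at hu hw
    have hu' := hu.2; have hw' := hw.2
    unfold rho at hu' hw'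
    have hmod : (Fintype.equivFin V u : ℕ) % k = (Fintype.equivFin V w : ℕ) % k := by
      have := hu'.trans hw'.symm
      exact_mod_cast this
    have : (Fintype.equivFin V u : ℕ) = (Fintype.equivFin V w : ℕ) := by
      rw [← Nat.div_add_mod (Fintype.equivFin V u : ℕ) k,
        ← Nat.div_add_mod (Fintype.equivFin V w : ℕ) k, hmod, he]
    have : (Fintype.equivFin V u) = (Fintype.equivFin V w) := Fin.ext this
    exact (Fintype.equivFin V).injective this

omit [DecidableEq V] in
lemma rho_lt (k : ℕ) (hk : 0 < k) (v : V) : 0 ≤ rho k v ∧ rho k v < k := by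
  unfold rho
  constructor
  · positivity
  · exact_mod_cast Nat.mod_lt _ hk

omit [DecidableEq V] in
lemma rho_emod (k : ℕ) (hk : 0 < k) (v : V) : rho k v % k = rho k v := by
  obtain ⟨h0, h1⟩ := rho_lt k hk v
  exact Int.emod_eq_of_lt h0 h1


/-- perturbation supported on the star at `v` -/
noncomputable def dd (v : V) (du : V → ℤ) : Sym2 V → ℤ :=
  fun e => ∑ u ∈ G.neighborFinset v, (if e = s(v, u) then du u else 0)

lemma dd_star {v u₀ : V} (h : u₀ ∈ G.neighborFinset v) (du : V → ℤ) :
    dd G v du s(v, u₀) = du u₀ := by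
  unfold dd
  rw [Finset.sum_eq_single u₀]
  · simp
  · intro b hb hne
    have : ¬ (s(v, u₀) = s(v, b)) := by
      rw [Sym2.eq_iff]
      rintro (⟨-, h2⟩ | ⟨h1, h2⟩)
      · exact hne h2.symm
      · rw [SimpleGraph.mem_neighborFinset] at h
        rw [← h2] at h
        exact G.irrefl h
    simp [this]
  · intro hc; exact absurd h hc

lemma dd_nonstar {v : V} (du : V → ℤ) {a b : V} (ha : a ≠ v) (hb : b ≠ v) :
    dd G v du s(a, b) = 0 := by
  unfold dd
  apply Finset.sum_eq_zero
  intro u hu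
  have : ¬ (s(a, b) = s(v, u)) := by
    rw [Sym2.eq_iff]
    rintro (⟨h1, -⟩ | ⟨-, h2⟩)
    · exact ha h1
    · exact hb h2
  simp [this]

lemma sig_add_dd_self (ω : Sym2 V → ℤ) (v : V) (du : V → ℤ) :
    sig G (fun e => ω e + dd G v du e) v = sig G ω v + ∑ u ∈ G.neighborFinset v, du u := by
  unfold sig
  rw [Finset.sum_add_distrib]
  congr 1
  apply Finset.sum_congr rfl
  intro u hu
  exact dd_star G hu du

lemma sig_add_dd_nbr (ω : Sym2 V → ℤ) {v w : V} (hw : w ≠ v) (hadj : G.Adj v w) (du : V → ℤ) :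
    sig G (fun e => ω e + dd G v du e) w = sig G ω w + du w := by
  unfold sig
  rw [Finset.sum_add_distrib]
  congr 1
  rw [Finset.sum_eq_single v]
  · rw [Sym2.eq_swap]
    exact dd_star G (by rwa [SimpleGraph.mem_neighborFinset]) du
  · intro b hb hbv
    exact dd_nonstar G du hw hbv
  · intro hc
    exact absurd (by rw [SimpleGraph.mem_neighborFinset]; exact hadj.symm : v ∈ G.neighborFinset w) hc

lemma sig_add_dd_far (ω : Sym2 V → ℤ) {v w : V} (hw : w ≠ v) (hadj : ¬ G.Adj v w) (du : V → ℤ) :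
    sig G (fun e => ω e + dd G v du e) w = sig G ω w := by
  unfold sig
  rw [Finset.sum_add_distrib]
  have : ∑ u ∈ G.neighborFinset w, dd G v du s(w, u) = 0 := by
    apply Finset.sum_eq_zero
    intro u hu
    rw [SimpleGraph.mem_neighborFinset] at hu
    apply dd_nonstar G du hw
    intro hc
    exact hadj (hc ▸ hu).symm
  rw [this, add_zero]


lemma exists_good_target (k : ℕ) (hk : 0 < k) (P : Finset V) (t : V → ℤ)
    (tres : ∀ u ∈ P, u ≠ repOf G u → t u % k = rho k u)
    (A : ℤ) (cnt : ℕ)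
    (hcnt : 3 * ((Fintype.card V / k + 1) + (roots G).card) < cnt) :
    ∃ i : ℕ, i < cnt ∧ ∀ u ∈ P,
      (A + k*i ≠ t u ∧ A + k*i ≠ t u + k ∧ A + k*i + k ≠ t u) := by
  classical
  set cands : Finset ℤ := (Finset.range cnt).image (fun i : ℕ => A + (k:ℤ)*i) with hcands
  have hinj : ∀ i ∈ Finset.range cnt, ∀ j ∈ Finset.range cnt,
      A + (k:ℤ)*i = A + (k:ℤ)*j → i = j := by
    intro i _ j _ h
    have hk' : (0:ℤ) < k := by exact_mod_cast hk
    have : (i:ℤ) = j := mul_left_cancel₀ (by positivity) (add_left_cancel h)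
    exact_mod_cast this
  have hcard : cands.card = cnt := by
    rw [hcands, Finset.card_image_of_injOn (fun i hi j hj h => hinj i hi j hj h), Finset.card_range]
  set badP : Finset V := P.filter (fun u => t u % k = A % k) with hbadP
  set bad : Finset ℤ := cands.filter
      (fun x => ∃ u ∈ P, x = t u ∨ x = t u + k ∨ x + k = t u) with hbad
  have hsub : bad ⊆ badP.biUnion (fun u => ({t u, t u - k, t u + k} : Finset ℤ)) := by
    intro x hx
    rw [hbad, Finset.mem_filter] at hx
    obtain ⟨hxc, u, huP, hcase⟩ := hx
    have hxmod : x % k = A % k := by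
      rw [hcands] at hxc
      obtain ⟨i, _, rfl⟩ := Finset.mem_image.mp hxc
      rw [Int.add_mul_emod_self_left]
    have humod : t u % k = A % k := by
      rcases hcase with h | h | h
      · rw [← h, hxmod]
      · have h' : t u = x - k := by omega
        rw [h', Int.sub_emod, Int.emod_self, sub_zero, Int.emod_emod_of_dvd _ dvd_rfl, hxmod]
      · have h' : t u = x + k := by omega
        rw [h', Int.add_emod, Int.emod_self, add_zero, Int.emod_emod_of_dvd _ dvd_rfl, hxmod]
    apply Finset.mem_biUnion.mpr
    refine ⟨u, by rw [hbadP, Finset.mem_filter]; exact ⟨huP, humod⟩, ?_⟩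
    simp only [Finset.mem_insert, Finset.mem_singleton]
    rcases hcase with h | h | h
    · left; exact h
    · right; right; exact h
    · right; left; omega
  have hbadcard : bad.card ≤ 3 * badP.card := by
    calc bad.card ≤ (badP.biUnion (fun u => ({t u, t u - k, t u + k} : Finset ℤ))).card :=
          Finset.card_le_card hsub
      _ ≤ ∑ u ∈ badP, ({t u, t u - k, t u + k} : Finset ℤ).card := Finset.card_biUnion_le
      _ ≤ ∑ u ∈ badP, 3 := Finset.sum_le_sum (fun u _ => by
          apply (Finset.card_insert_le _ _).trans
          have h2 := Finset.card_insert_le (t u - k) ({t u + k} : Finset ℤ)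
          simp only [Finset.card_singleton] at h2 ⊢
          omega)
      _ = 3 * badP.card := by rw [Finset.sum_const, smul_eq_mul, mul_comm]
  have hbadPcard : badP.card ≤ (Fintype.card V / k + 1) + (roots G).card := by
    have hsub2 : badP ⊆ (univ.filter (fun u : V => rho k u = A % k)) ∪ roots G := by
      intro u hu
      rw [hbadP, Finset.mem_filter] at hu
      by_cases hroot : u = repOf G u
      · exact Finset.mem_union_right _ (Finset.mem_filter.mpr ⟨Finset.mem_univ _, hroot⟩)
      · apply Finset.mem_union_left
        rw [Finset.mem_filter]
        exact ⟨Finset.mem_univ _, by rw [← tres u hu.1 hroot, hu.2]⟩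
    calc badP.card ≤ _ := Finset.card_le_card hsub2
      _ ≤ (univ.filter (fun u : V => rho k u = A % k)).card + (roots G).card :=
          Finset.card_union_le _ _
      _ ≤ (Fintype.card V / k + 1) + (roots G).card := by
          have := rho_class_card (V := V) k hk (A % k)
          omega
  have hlt : bad.card < cands.card := by
    rw [hcard]
    have : bad.card ≤ 3 * ((Fintype.card V / k + 1) + (roots G).card) := by
      calc bad.card ≤ 3 * badP.card := hbadcard
        _ ≤ _ := by omega
    omega
  obtain ⟨x, hxc, hxb⟩ : ∃ x ∈ cands, x ∉ bad := by
    by_contra hcon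
    push_neg at hcon
    have := Finset.card_le_card (fun x hx => hcon x hx)
    omega
  have hxgood : ∀ u ∈ P, x ≠ t u ∧ x ≠ t u + k ∧ x + k ≠ t u := by
    intro u huP
    have hnot : ¬ (∃ u ∈ P, x = t u ∨ x = t u + k ∨ x + k = t u) := by
      intro hex
      exact hxb (by rw [hbad, Finset.mem_filter]; exact ⟨hxc, hex⟩)
    push_neg at hnot
    have := hnot u huP
    tauto
  rw [hcands] at hxc
  obtain ⟨i, hi, rfl⟩ := Finset.mem_image.mp hxc
  exact ⟨i, Finset.mem_range.mp hi, hxgood⟩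

structure St (k : ℕ) (P : Finset V) (ω : Sym2 V → ℤ) (t : V → ℤ) : Prop where
  w_out : ∀ ⦃a b : V⦄, G.Adj a b → a ∉ P → b ∉ P → ω s(a,b) = 3*(k:ℤ)
  w_mix : ∀ ⦃a b : V⦄, G.Adj a b → a ∈ P → b ∉ P → ((k:ℤ)+1 ≤ ω s(a,b) ∧ ω s(a,b) ≤ 4*(k:ℤ))
  w_in  : ∀ ⦃a b : V⦄, G.Adj a b → a ∈ P → b ∈ P → ((1:ℤ) ≤ ω s(a,b) ∧ ω s(a,b) ≤ 5*(k:ℤ))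
  sig_mem : ∀ u ∈ P, sig G ω u = t u ∨ sig G ω u = t u + (k:ℤ)
  t_sep : ∀ u ∈ P, ∀ u' ∈ P, u ≠ u' →
    t u ≠ t u' ∧ t u ≠ t u' + (k:ℤ) ∧ t u + (k:ℤ) ≠ t u'
  t_res : ∀ u ∈ P, u ≠ repOf G u → t u % (k:ℤ) = rho k u
  ord : ∀ p ∈ P, ∀ q, q ∉ P → mu G q ≤ mu G p

lemma step_core (k : ℕ) (hk : 0 < k) {P : Finset V} {ω : Sym2 V → ℤ} {t : V → ℤ}
    (hSt : St G k P ω t) {v : V} (hvP : v ∉ P)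
    (hmax : ∀ q, q ∉ P → mu G q ≤ mu G v)
    (ustar : V) (f : ℤ) (hf0 : 0 ≤ f) (hfk : f ≤ (k:ℤ) - 1)
    (hustar : (G.Adj v ustar ∧ ustar ∉ P) ∨ (f = 0 ∧ ustar = v))
    (Slo Shi Sup Sdn : Finset V)
    (hSlo : ∀ u ∈ Slo, G.Adj v u ∧ u ∈ P ∧ sig G ω u = t u)
    (hShi : ∀ u ∈ Shi, G.Adj v u ∧ u ∈ P ∧ sig G ω u = t u + (k:ℤ))
    (hSup : ∀ u ∈ Sup, G.Adj v u ∧ u ∉ P ∧ u ≠ ustar)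
    (hSdn : ∀ u ∈ Sdn, G.Adj v u ∧ u ∉ P ∧ u ≠ ustar)
    (hdisj : Disjoint Sup Sdn)
    (x : ℤ)
    (hx : x = sig G ω v + (k:ℤ)*Slo.card + (k:ℤ)*Sup.card
      - (k:ℤ)*Shi.card - (k:ℤ)*Sdn.card - f)
    (hgood : ∀ u ∈ P, x ≠ t u ∧ x ≠ t u + (k:ℤ) ∧ x + (k:ℤ) ≠ t u)
    (hres : v ≠ repOf G v → x % (k:ℤ) = rho k v) :
    ∃ ω', St G k (insert v P) ω' (Function.update t v x) := by
  classical
  have hkz : (0:ℤ) < k := by exact_mod_cast hk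
  set du : V → ℤ := fun u =>
    (if u ∈ Slo ∪ Sup then (k:ℤ) else 0) - (if u ∈ Shi ∪ Sdn then (k:ℤ) else 0)
      - (if u = ustar then f else 0) with hdu
  set ω' : Sym2 V → ℤ := fun e => ω e + dd G v du e with hω'
  refine ⟨ω', ?_⟩
  -- basic set facts
  have hSloShi : ∀ u, u ∈ Slo → u ∈ Shi → False := by
    intro u h1 h2
    have e1 := (hSlo u h1).2.2
    have e2 := (hShi u h2).2.2
    rw [e1] at e2
    omega
  have hustar_notP : ustar ∉ P := by
    rcases hustar with ⟨-, h⟩ | ⟨-, h⟩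
    · exact h
    · exact h ▸ hvP
  -- du evaluations
  have du_lo : ∀ u ∈ Slo, du u = (k:ℤ) := by
    intro u hu
    have h1 : u ∈ Slo ∪ Sup := Finset.mem_union_left _ hu
    have h2 : u ∉ Shi ∪ Sdn := by
      intro hc
      rcases Finset.mem_union.mp hc with hc | hc
      · exact hSloShi u hu hc
      · exact (hSdn u hc).2.1 (hSlo u hu).2.1
    have h3 : u ≠ ustar := fun hc => hustar_notP (hc ▸ (hSlo u hu).2.1)
    show ((if u ∈ Slo ∪ Sup then (k:ℤ) else 0) - if u ∈ Shi ∪ Sdn then (k:ℤ) else 0) - (if u = ustar then f else 0) = _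
    rw [if_pos h1, if_neg h2, if_neg h3]; ring
  have du_hi : ∀ u ∈ Shi, du u = -(k:ℤ) := by
    intro u hu
    have h1 : u ∉ Slo ∪ Sup := by
      intro hc
      rcases Finset.mem_union.mp hc with hc | hc
      · exact hSloShi u hc hu
      · exact (hSup u hc).2.1 (hShi u hu).2.1
    have h2 : u ∈ Shi ∪ Sdn := Finset.mem_union_left _ hu
    have h3 : u ≠ ustar := fun hc => hustar_notP (hc ▸ (hShi u hu).2.1)
    show ((if u ∈ Slo ∪ Sup then (k:ℤ) else 0) - if u ∈ Shi ∪ Sdn then (k:ℤ) else 0) - (if u = ustar then f else 0) = _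
    rw [if_neg h1, if_pos h2, if_neg h3]; ring
  have du_up : ∀ u ∈ Sup, du u = (k:ℤ) := by
    intro u hu
    have h1 : u ∈ Slo ∪ Sup := Finset.mem_union_right _ hu
    have h2 : u ∉ Shi ∪ Sdn := by
      intro hc
      rcases Finset.mem_union.mp hc with hc | hc
      · exact (hSup u hu).2.1 (hShi u hc).2.1
      · exact (Finset.disjoint_left.mp hdisj hu) hc
    have h3 : u ≠ ustar := (hSup u hu).2.2
    show ((if u ∈ Slo ∪ Sup then (k:ℤ) else 0) - if u ∈ Shi ∪ Sdn then (k:ℤ) else 0) - (if u = ustar then f else 0) = _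
    rw [if_pos h1, if_neg h2, if_neg h3]; ring
  have du_dn : ∀ u ∈ Sdn, du u = -(k:ℤ) := by
    intro u hu
    have h1 : u ∉ Slo ∪ Sup := by
      intro hc
      rcases Finset.mem_union.mp hc with hc | hc
      · exact (hSdn u hu).2.1 (hSlo u hc).2.1
      · exact (Finset.disjoint_left.mp hdisj hc) hu
    have h2 : u ∈ Shi ∪ Sdn := Finset.mem_union_right _ hu
    have h3 : u ≠ ustar := (hSdn u hu).2.2
    show ((if u ∈ Slo ∪ Sup then (k:ℤ) else 0) - if u ∈ Shi ∪ Sdn then (k:ℤ) else 0) - (if u = ustar then f else 0) = _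
    rw [if_neg h1, if_pos h2, if_neg h3]; ring
  have du_star : du ustar = -f := by
    have h1 : ustar ∉ Slo ∪ Sup := by
      intro hc
      rcases Finset.mem_union.mp hc with hc | hc
      · exact hustar_notP (hSlo ustar hc).2.1
      · exact (hSup ustar hc).2.2 rfl
    have h2 : ustar ∉ Shi ∪ Sdn := by
      intro hc
      rcases Finset.mem_union.mp hc with hc | hc
      · exact hustar_notP (hShi ustar hc).2.1
      · exact (hSdn ustar hc).2.2 rfl
    show ((if ustar ∈ Slo ∪ Sup then (k:ℤ) else 0) - if ustar ∈ Shi ∪ Sdn then (k:ℤ) else 0) - (if ustar = ustar then f else 0) = _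
    rw [if_neg h1, if_neg h2, if_pos rfl]; ring
  have du_zero : ∀ u, u ∉ Slo → u ∉ Shi → u ∉ Sup → u ∉ Sdn → u ≠ ustar → du u = 0 := by
    intro u h1 h2 h3 h4 h5
    have hu1 : u ∉ Slo ∪ Sup := by
      intro hc; rcases Finset.mem_union.mp hc with hc | hc
      · exact h1 hc
      · exact h3 hc
    have hu2 : u ∉ Shi ∪ Sdn := by
      intro hc; rcases Finset.mem_union.mp hc with hc | hc
      · exact h2 hc
      · exact h4 hc
    show ((if u ∈ Slo ∪ Sup then (k:ℤ) else 0) - if u ∈ Shi ∪ Sdn then (k:ℤ) else 0) - (if u = ustar then f else 0) = _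
    rw [if_neg hu1, if_neg hu2, if_neg h5]; ring
  have du_zeroP : ∀ u ∈ P, u ∉ Slo → u ∉ Shi → du u = 0 := by
    intro u hu h1 h2
    exact du_zero u h1 h2 (fun hc => (hSup u hc).2.1 hu) (fun hc => (hSdn u hc).2.1 hu)
      (fun hc => hustar_notP (hc ▸ hu))
  -- the sum over the star
  have hsum : ∑ u ∈ G.neighborFinset v, du u
      = (k:ℤ)*Slo.card + (k:ℤ)*Sup.card - (k:ℤ)*Shi.card - (k:ℤ)*Sdn.card - f := by
    have hsub1 : Slo ∪ Sup ⊆ G.neighborFinset v := by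
      intro u hu
      rw [SimpleGraph.mem_neighborFinset]
      rcases Finset.mem_union.mp hu with hu | hu
      · exact (hSlo u hu).1
      · exact (hSup u hu).1
    have hsub2 : Shi ∪ Sdn ⊆ G.neighborFinset v := by
      intro u hu
      rw [SimpleGraph.mem_neighborFinset]
      rcases Finset.mem_union.mp hu with hu | hu
      · exact (hShi u hu).1
      · exact (hSdn u hu).1
    have hd1 : Disjoint Slo Sup :=
      Finset.disjoint_left.mpr (fun u hu hc => (hSup u hc).2.1 (hSlo u hu).2.1)
    have hd2 : Disjoint Shi Sdn :=
      Finset.disjoint_left.mpr (fun u hu hc => (hSdn u hc).2.1 (hShi u hu).2.1)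
    rw [hdu]
    rw [Finset.sum_sub_distrib, Finset.sum_sub_distrib]
    have e1 : ∑ u ∈ G.neighborFinset v, (if u ∈ Slo ∪ Sup then (k:ℤ) else 0)
        = (k:ℤ) * (Slo.card + Sup.card) := by
      rw [Finset.sum_ite_mem, Finset.inter_eq_right.mpr hsub1, Finset.sum_const,
        Finset.card_union_of_disjoint hd1]
      push_cast
      ring
    have e2 : ∑ u ∈ G.neighborFinset v, (if u ∈ Shi ∪ Sdn then (k:ℤ) else 0)
        = (k:ℤ) * (Shi.card + Sdn.card) := by
      rw [Finset.sum_ite_mem, Finset.inter_eq_right.mpr hsub2, Finset.sum_const,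
        Finset.card_union_of_disjoint hd2]
      push_cast
      ring
    have e3 : ∑ u ∈ G.neighborFinset v, (if u = ustar then f else 0) = f := by
      rcases hustar with ⟨hadj, -⟩ | ⟨hf, hu⟩
      · rw [Finset.sum_ite_eq' (G.neighborFinset v) ustar (fun _ => f)]
        simp [SimpleGraph.mem_neighborFinset, hadj]
      · rw [Finset.sum_ite_eq' (G.neighborFinset v) ustar (fun _ => f)]
        rw [hu, hf]
        simp
    rw [e1, e2, e3]
    push_cast
    ring
  -- new sigma values
  have hsig_v : sig G ω' v = x := by
    rw [hω', sig_add_dd_self, hsum, hx]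
    ring
  have hsig_keep : ∀ u, u ≠ v → (¬ G.Adj v u ∨ du u = 0) → sig G ω' u = sig G ω u := by
    intro u hu hcase
    rcases hcase with h | h
    · exact sig_add_dd_far G ω hu h du
    · by_cases hadj : G.Adj v u
      · rw [hω', sig_add_dd_nbr G ω hu hadj du, h, add_zero]
      · exact sig_add_dd_far G ω hu hadj du
  have hne_v : ∀ u ∈ P, u ≠ v := fun u hu hc => hvP (hc ▸ hu)
  -- weight values
  have hw_star : ∀ u, G.Adj v u → ω' s(v,u) = ω s(v,u) + du u := by
    intro u hadj
    rw [hω']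
    simp only []
    rw [dd_star G (by rwa [SimpleGraph.mem_neighborFinset]) du]
  have hw_nonstar : ∀ a b, a ≠ v → b ≠ v → ω' s(a,b) = ω s(a,b) := by
    intro a b ha hb
    rw [hω']
    simp only []
    rw [dd_nonstar G du ha hb, add_zero]
  constructor
  -- w_out
  · intro a b hadj ha hb
    have ha' : a ∉ P := fun hc => ha (Finset.mem_insert_of_mem hc)
    have hb' : b ∉ P := fun hc => hb (Finset.mem_insert_of_mem hc)
    have hav : a ≠ v := fun hc => ha (hc ▸ Finset.mem_insert_self v P)
    have hbv : b ≠ v := fun hc => hb (hc ▸ Finset.mem_insert_self v P)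
    rw [hw_nonstar a b hav hbv]
    exact hSt.w_out hadj ha' hb'
  -- w_mix
  · intro a b hadj ha hb
    have hb' : b ∉ P := fun hc => hb (Finset.mem_insert_of_mem hc)
    have hbv : b ≠ v := fun hc => hb (hc ▸ Finset.mem_insert_self v P)
    rcases Finset.mem_insert.mp ha with rfl | haP
    · -- a = v, b is a successor
      rw [hw_star b hadj]
      have hbase := hSt.w_out hadj hvP hb'
      rw [hbase]
      by_cases h1 : b ∈ Sup
      · rw [du_up b h1]; omega
      by_cases h2 : b ∈ Sdn
      · rw [du_dn b h2]; omega
      by_cases h3 : b = ustar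
      · rw [h3, du_star]; omega
      · rw [du_zero b (fun hc => hb' (hSlo b hc).2.1) (fun hc => hb' (hShi b hc).2.1) h1 h2 h3]
        omega
    · -- a ∈ P, a ≠ v, b ∉ insert
      have hav : a ≠ v := hne_v a haP
      rw [hw_nonstar a b hav hbv]
      exact hSt.w_mix hadj haP hb'
  -- w_in
  · intro a b hadj ha hb
    rcases Finset.mem_insert.mp ha with rfl | haP
    · rcases Finset.mem_insert.mp hb with rfl | hbP
      · exact absurd hadj (G.irrefl)
      · -- edge v-b, b ∈ P : predecessor edge
        rw [hw_star b hadj]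
        have hbase := hSt.w_mix hadj.symm hbP hvP
        rw [Sym2.eq_swap] at hbase
        by_cases h1 : b ∈ Slo
        · rw [du_lo b h1]; omega
        by_cases h2 : b ∈ Shi
        · rw [du_hi b h2]; omega
        · rw [du_zeroP b hbP h1 h2]; omega
    · rcases Finset.mem_insert.mp hb with rfl | hbP
      · -- edge a-v, a ∈ P
        have h := hw_star a hadj.symm
        rw [Sym2.eq_swap] at h
        rw [h]
        have hbase := hSt.w_mix hadj haP hvP
        by_cases h1 : a ∈ Slo
        · rw [du_lo a h1]; omega
        by_cases h2 : a ∈ Shi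
        · rw [du_hi a h2]; omega
        · rw [du_zeroP a haP h1 h2]; omega
      · have hav : a ≠ v := hne_v a haP
        have hbv : b ≠ v := hne_v b hbP
        rw [hw_nonstar a b hav hbv]
        exact hSt.w_in hadj haP hbP
  -- sig_mem
  · intro u hu
    rcases Finset.mem_insert.mp hu with rfl | huP
    · left
      rw [hsig_v, Function.update_self]
    · have huv : u ≠ v := hne_v u huP
      rw [Function.update_of_ne huv]
      by_cases h1 : u ∈ Slo
      · right
        have hadj := (hSlo u h1).1
        rw [hω', sig_add_dd_nbr G ω huv hadj du, du_lo u h1, (hSlo u h1).2.2]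
      by_cases h2 : u ∈ Shi
      · left
        have hadj := (hShi u h2).1
        rw [hω', sig_add_dd_nbr G ω huv hadj du, du_hi u h2, (hShi u h2).2.2]
        ring
      · have : sig G ω' u = sig G ω u := by
          by_cases hadj : G.Adj v u
          · rw [hω', sig_add_dd_nbr G ω huv hadj du, du_zeroP u huP h1 h2, add_zero]
          · exact sig_add_dd_far G ω huv hadj du
        rw [this]
        exact hSt.sig_mem u huP
  -- t_sep
  · intro u hu u' hu' hne
    rcases Finset.mem_insert.mp hu with rfl | huP
    · rcases Finset.mem_insert.mp hu' with rfl | hu'P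
      · exact absurd rfl hne
      · rw [Function.update_self, Function.update_of_ne (hne_v u' hu'P)]
        exact hgood u' hu'P
    · rcases Finset.mem_insert.mp hu' with rfl | hu'P
      · rw [Function.update_self, Function.update_of_ne (hne_v u huP)]
        obtain ⟨g1, g2, g3⟩ := hgood u huP
        exact ⟨fun hc => g1 hc.symm, fun hc => g3 hc.symm, fun hc => g2 hc.symm⟩
      · rw [Function.update_of_ne (hne_v u huP), Function.update_of_ne (hne_v u' hu'P)]
        exact hSt.t_sep u huP u' hu'P hne
  -- t_res
  · intro u hu hroot
    rcases Finset.mem_insert.mp hu with rfl | huP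
    · rw [Function.update_self]
      exact hres hroot
    · rw [Function.update_of_ne (hne_v u huP)]
      exact hSt.t_res u huP hroot
  -- ord
  · intro p hp q hq
    have hq' : q ∉ P := fun hc => hq (Finset.mem_insert_of_mem hc)
    rcases Finset.mem_insert.mp hp with rfl | hpP
    · exact hmax q hq'
    · exact hSt.ord p hpP q hq'

lemma step (k δ : ℕ) (hk : 0 < k)
    (hδdeg : ∀ w : V, δ ≤ G.degree w)
    (hcnt : 3 * ((Fintype.card V / k + 1) + (roots G).card) < δ)
    {P : Finset V} {ω : Sym2 V → ℤ} {t : V → ℤ}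
    (hSt : St G k P ω t) (hP : P ≠ univ) :
    ∃ v, v ∉ P ∧ ∃ ω' t', St G k (insert v P) ω' t' := by
  classical
  have hkz : (0:ℤ) < k := by exact_mod_cast hk
  -- choose v of maximal mu among unprocessed
  have hne : (univ \ P).Nonempty := by
    rw [Finset.sdiff_nonempty]
    intro hc
    exact hP (le_antisymm (Finset.subset_univ P) hc)
  obtain ⟨v, hvmem, hvmax⟩ := Finset.exists_max_image (univ \ P) (mu G) hne
  have hvP : v ∉ P := (Finset.mem_sdiff.mp hvmem).2
  have hmax : ∀ q, q ∉ P → mu G q ≤ mu G v := by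
    intro q hq
    exact hvmax q (Finset.mem_sdiff.mpr ⟨Finset.mem_univ q, hq⟩)
  refine ⟨v, hvP, ?_⟩
  -- the neighbour sets
  set N := G.neighborFinset v with hN
  set loP := (N ∩ P).filter (fun u => sig G ω u = t u) with hloP
  set hiP := (N ∩ P).filter (fun u => ¬ sig G ω u = t u) with hhiP
  set Nsucc := N \ P with hNsucc
  have hLoHi : loP.card + hiP.card = (N ∩ P).card :=
    Finset.card_filter_add_card_filter_not _
  have hNcard : (N ∩ P).card + Nsucc.card = G.degree v := by
    rw [hN, hNsucc, Finset.card_inter_add_card_sdiff]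
    exact G.card_neighborFinset_eq_degree v
  have hdeg : δ ≤ loP.card + hiP.card + Nsucc.card := by
    rw [hLoHi, hNcard]
    exact hδdeg v
  have hloP_mem : ∀ u ∈ loP, G.Adj v u ∧ u ∈ P ∧ sig G ω u = t u := by
    intro u hu
    rw [hloP, Finset.mem_filter, Finset.mem_inter, hN, SimpleGraph.mem_neighborFinset] at hu
    exact ⟨hu.1.1, hu.1.2, hu.2⟩
  have hhiP_mem : ∀ u ∈ hiP, G.Adj v u ∧ u ∈ P ∧ sig G ω u = t u + (k:ℤ) := by
    intro u hu
    rw [hhiP, Finset.mem_filter, Finset.mem_inter, hN, SimpleGraph.mem_neighborFinset] at hu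
    refine ⟨hu.1.1, hu.1.2, ?_⟩
    rcases hSt.sig_mem u hu.1.2 with h | h
    · exact absurd h hu.2
    · exact h
  have hNsucc_mem : ∀ u ∈ Nsucc, G.Adj v u ∧ u ∉ P := by
    intro u hu
    rw [hNsucc, Finset.mem_sdiff, hN, SimpleGraph.mem_neighborFinset] at hu
    exact hu
  set Lo := loP.card with hLod
  set Hi := hiP.card with hHid
  set Su := Nsucc.card with hSud
  by_cases hroot : v = repOf G v
  · -- ROOT CASE : all neighbours processed
    have hSu0 : Nsucc = ∅ := by
      by_contra hc
      obtain ⟨u, hu⟩ := Finset.nonempty_of_ne_empty hc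
      obtain ⟨hadj, huP⟩ := hNsucc_mem u hu
      have h1 : mu G u ≤ mu G v := hmax u huP
      have h2 : mu G v = 0 := by
        unfold mu
        rw [← hroot]
        exact SimpleGraph.dist_self
      have h3 : mu G u = 0 := by omega
      have h4 : u = repOf G u := by
        rcases (SimpleGraph.dist_eq_zero_iff_eq_or_not_reachable).mp h3 with h | h
        · exact h
        · exact absurd (reachable_repOf G u) h
      have h5 : repOf G u = repOf G v := repOf_adj G hadj.symm
      rw [h5, ← hroot] at h4
      exact G.irrefl (h4 ▸ hadj)
    have hSuz : Su = 0 := by rw [hSud, hSu0]; rfl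
    have hdeg' : δ ≤ Lo + Hi := by omega
    obtain ⟨i, hi, hgood⟩ := exists_good_target G k hk P t hSt.t_res
      (sig G ω v - (k:ℤ)*Hi) δ hcnt
    set x : ℤ := (sig G ω v - (k:ℤ)*Hi) + (k:ℤ)*i with hxd
    by_cases him : Hi ≤ i
    · -- take Slo of size i - Hi
      have hile : i - Hi ≤ Lo := by omega
      obtain ⟨Slo, hSloSub, hSloCard⟩ := Finset.exists_subset_card_eq (s := loP) (n := i - Hi)
        (by omega)
      obtain ⟨ω', hcore⟩ := step_core G k hk hSt hvP hmax v 0 le_rfl (by omega)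
        (Or.inr ⟨rfl, rfl⟩) Slo ∅ ∅ ∅
        (fun u hu => hloP_mem u (hSloSub hu))
        (fun u hu => absurd hu (Finset.notMem_empty u))
        (fun u hu => absurd hu (Finset.notMem_empty u))
        (fun u hu => absurd hu (Finset.notMem_empty u))
        (Finset.disjoint_left.mpr (fun u hu => absurd hu (Finset.notMem_empty u)))
        x
        (by
          rw [hSloCard]
          simp only [Finset.card_empty, Nat.cast_zero, hxd]
          push_cast [Nat.cast_sub him]
          ring)
        hgood
        (fun h => absurd hroot h)
      exact ⟨ω', Function.update t v x, hcore⟩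
    · -- take Shi of size Hi - i
      obtain ⟨Shi, hShiSub, hShiCard⟩ := Finset.exists_subset_card_eq (s := hiP) (n := Hi - i)
        (by omega)
      obtain ⟨ω', hcore⟩ := step_core G k hk hSt hvP hmax v 0 le_rfl (by omega)
        (Or.inr ⟨rfl, rfl⟩) ∅ Shi ∅ ∅
        (fun u hu => absurd hu (Finset.notMem_empty u))
        (fun u hu => hhiP_mem u (hShiSub hu))
        (fun u hu => absurd hu (Finset.notMem_empty u))
        (fun u hu => absurd hu (Finset.notMem_empty u))
        (Finset.disjoint_left.mpr (fun u hu => absurd hu (Finset.notMem_empty u)))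
        x
        (by
          rw [hShiCard]
          simp only [Finset.card_empty, Nat.cast_zero, hxd]
          push_cast [Nat.cast_sub (by omega : i ≤ Hi)]
          ring)
        hgood
        (fun h => absurd hroot h)
      exact ⟨ω', Function.update t v x, hcore⟩
  · -- NON-ROOT CASE
    obtain ⟨us, hadj, hmu⟩ := exists_adj_mu_lt G hroot
    have husP : us ∉ P := by
      intro hc
      have := hSt.ord us hc v hvP
      omega
    have husN : us ∈ Nsucc := by
      rw [hNsucc, Finset.mem_sdiff, hN, SimpleGraph.mem_neighborFinset]
      exact ⟨hadj, husP⟩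
    have hSu1 : 1 ≤ Su := Finset.card_pos.mpr ⟨us, husN⟩
    set L : ℤ := sig G ω v - (k:ℤ)*((Hi:ℤ) + (Su:ℤ) - 1) - ((k:ℤ) - 1) with hLd
    set A : ℤ := L + ((rho k v - L) % k) with hAd
    obtain ⟨i, hi, hgood⟩ := exists_good_target G k hk P t hSt.t_res A δ hcnt
    set x : ℤ := A + (k:ℤ)*i with hxd
    -- residue of x
    have hresx : x % (k:ℤ) = rho k v := by
      rw [hxd, Int.add_mul_emod_self_left, hAd]
      conv_lhs => rw [Int.add_emod, Int.emod_emod_of_dvd _ dvd_rfl, ← Int.add_emod]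
      rw [add_sub_cancel]
      exact rho_emod k hk v
    -- the fine part and coarse part
    set f : ℤ := (sig G ω v - x) % k with hfd
    have hf0 : 0 ≤ f := Int.emod_nonneg _ (by omega)
    have hfk : f ≤ (k:ℤ) - 1 := by
      have := Int.emod_lt_of_pos (sig G ω v - x) hkz
      omega
    have heq := Int.emod_add_mul_ediv (sig G ω v - x) (k:ℤ)
    set m : ℤ := (sig G ω v - x) / (k:ℤ) with hmd
    have hkm : (k:ℤ)*m = sig G ω v - x - f := by
      rw [hfd]
      linarith [heq]
    -- bounds on m
    have hmod0 : 0 ≤ (rho k v - L) % k := Int.emod_nonneg _ (by omega)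
    have hmodk : (rho k v - L) % k ≤ (k:ℤ) - 1 := by
      have := Int.emod_lt_of_pos (rho k v - L) hkz
      omega
    have hxL : L ≤ x := by
      rw [hxd, hAd]
      have : (0:ℤ) ≤ (k:ℤ)*i := by positivity
      omega
    have hxU : x ≤ L + ((k:ℤ) - 1) + (k:ℤ)*((δ:ℤ)-1) := by
      rw [hxd, hAd]
      have h1 : (k:ℤ)*i ≤ (k:ℤ)*((δ:ℤ)-1) := by
        apply mul_le_mul_of_nonneg_left _ (by omega)
        have : (i:ℤ) < (δ:ℤ) := by exact_mod_cast hi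
        omega
      omega
    have e1 : sig G ω v - L = (k:ℤ)*((Hi:ℤ)+(Su:ℤ)-1) + ((k:ℤ)-1) := by
      rw [hLd]; ring
    have hmub : m ≤ (Hi:ℤ) + (Su:ℤ) - 1 := by
      have h1 : (k:ℤ)*m ≤ (k:ℤ)*((Hi:ℤ) + (Su:ℤ) - 1) + ((k:ℤ)-1) := by
        linarith [hkm, hxL, hf0, e1]
      by_contra hc
      push_neg at hc
      have h2 : (Hi:ℤ) + (Su:ℤ) ≤ m := by omega
      have h3 : (k:ℤ)*((Hi:ℤ)+(Su:ℤ)) ≤ (k:ℤ)*m :=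
        mul_le_mul_of_nonneg_left h2 (by omega)
      have e2 : (k:ℤ)*((Hi:ℤ)+(Su:ℤ)-1) = (k:ℤ)*((Hi:ℤ)+(Su:ℤ)) - (k:ℤ) := by ring
      linarith
    have hmlb : -(Lo:ℤ) ≤ m := by
      have hdegz : (δ:ℤ) ≤ (Lo:ℤ) + (Hi:ℤ) + (Su:ℤ) := by exact_mod_cast hdeg
      have e3 : (k:ℤ)*((Hi:ℤ)+(Su:ℤ)-(δ:ℤ)) = (k:ℤ)*((Hi:ℤ)+(Su:ℤ)-1) - (k:ℤ)*((δ:ℤ)-1) := by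
        ring
      have h1 : (k:ℤ)*((Hi:ℤ) + (Su:ℤ) - (δ:ℤ)) - ((k:ℤ)-1) ≤ (k:ℤ)*m := by
        linarith [hkm, hxU, hfk, e1, e3]
      by_contra hc
      push_neg at hc
      have h2 : m ≤ -(Lo:ℤ) - 1 := by omega
      have h3 : (k:ℤ)*m ≤ (k:ℤ)*(-(Lo:ℤ) - 1) := mul_le_mul_of_nonneg_left h2 (by omega)
      have h4 : (k:ℤ)*(-(Lo:ℤ)) ≤ (k:ℤ)*((Hi:ℤ)+(Su:ℤ)-(δ:ℤ)) :=
        mul_le_mul_of_nonneg_left (by omega) (by omega)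
      have e4 : (k:ℤ)*(-(Lo:ℤ)-1) = (k:ℤ)*(-(Lo:ℤ)) - (k:ℤ) := by ring
      linarith
    by_cases hm0 : m ≤ 0
    · -- go UP using Slo, size (-m).toNat ≤ Lo
      set p : ℕ := (-m).toNat with hpd
      have hpz : (p:ℤ) = -m := Int.toNat_of_nonneg (by omega)
      have hpLo : p ≤ Lo := by
        have : (p:ℤ) ≤ (Lo:ℤ) := by omega
        exact_mod_cast this
      obtain ⟨Slo, hSloSub, hSloCard⟩ := Finset.exists_subset_card_eq (s := loP) (n := p)
        (by rw [← hLod]; exact hpLo)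
      obtain ⟨ω', hcore⟩ := step_core G k hk hSt hvP hmax us f hf0 hfk
        (Or.inl ⟨hadj, husP⟩) Slo ∅ ∅ ∅
        (fun u hu => hloP_mem u (hSloSub hu))
        (fun u hu => absurd hu (Finset.notMem_empty u))
        (fun u hu => absurd hu (Finset.notMem_empty u))
        (fun u hu => absurd hu (Finset.notMem_empty u))
        (Finset.disjoint_left.mpr (fun u hu => absurd hu (Finset.notMem_empty u)))
        x
        (by
          rw [hSloCard]
          simp only [Finset.card_empty, Nat.cast_zero]
          rw [hpz]
          linarith [hkm])
        hgood
        (fun _ => hresx)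
      exact ⟨ω', Function.update t v x, hcore⟩
    · -- go DOWN using Shi and Sdn
      push_neg at hm0
      set q : ℕ := m.toNat with hqd
      have hqz : (q:ℤ) = m := Int.toNat_of_nonneg (by omega)
      set q1 : ℕ := min q Hi with hq1d
      set q2 : ℕ := q - q1 with hq2d
      have hq1Hi : q1 ≤ Hi := min_le_right _ _
      have hq2Su : q2 ≤ Su - 1 := by
        have hqb : (q:ℤ) ≤ (Hi:ℤ) + (Su:ℤ) - 1 := by omega
        have hqb' : q ≤ Hi + Su - 1 := by omega
        omega
      obtain ⟨Shi, hShiSub, hShiCard⟩ := Finset.exists_subset_card_eq (s := hiP) (n := q1)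
        (by rw [← hHid]; exact hq1Hi)
      have hNsuccErase : (Nsucc.erase us).card = Su - 1 := by
        rw [Finset.card_erase_of_mem husN, hSud]
      obtain ⟨Sdn, hSdnSub, hSdnCard⟩ := Finset.exists_subset_card_eq
        (s := Nsucc.erase us) (n := q2) (by omega)
      obtain ⟨ω', hcore⟩ := step_core G k hk hSt hvP hmax us f hf0 hfk
        (Or.inl ⟨hadj, husP⟩) ∅ Shi ∅ Sdn
        (fun u hu => absurd hu (Finset.notMem_empty u))
        (fun u hu => hhiP_mem u (hShiSub hu))
        (fun u hu => absurd hu (Finset.notMem_empty u))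
        (fun u hu => by
          have h1 := hSdnSub hu
          rw [Finset.mem_erase] at h1
          obtain ⟨hne', hmem⟩ := h1
          obtain ⟨ha, hp⟩ := hNsucc_mem u hmem
          exact ⟨ha, hp, hne'⟩)
        (Finset.disjoint_left.mpr (fun u hu => absurd hu (Finset.notMem_empty u)))
        x
        (by
          rw [hShiCard, hSdnCard]
          simp only [Finset.card_empty, Nat.cast_zero]
          have hq12 : (q1:ℤ) + (q2:ℤ) = m := by
            have : q1 + q2 = q := by omega
            rw [← hqz]
            exact_mod_cast this
          have e : (k:ℤ)*(q1:ℤ) + (k:ℤ)*(q2:ℤ) = (k:ℤ)*m := by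
            rw [← hq12]; ring
          linarith [hkm, e])
        hgood
        (fun _ => hresx)
      exact ⟨ω', Function.update t v x, hcore⟩

lemma build (k δ : ℕ) (hk : 0 < k)
    (hδdeg : ∀ w : V, δ ≤ G.degree w)
    (hcnt : 3 * ((Fintype.card V / k + 1) + (roots G).card) < δ) :
    ∃ ω t, St G k univ ω t := by
  classical
  have hinit : St G k ∅ (fun _ => 3*(k:ℤ)) (fun _ => 0) := by
    constructor
    · intro a b _ _ _; rfl
    · intro a b _ ha _; exact absurd ha (Finset.notMem_empty a)
    · intro a b _ ha _; exact absurd ha (Finset.notMem_empty a)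
    · intro u hu; exact absurd hu (Finset.notMem_empty u)
    · intro u hu; exact absurd hu (Finset.notMem_empty u)
    · intro u hu; exact absurd hu (Finset.notMem_empty u)
    · intro p hp; exact absurd hp (Finset.notMem_empty p)
  suffices h : ∀ m (P : Finset V) (ω : Sym2 V → ℤ) (t : V → ℤ),
      St G k P ω t → (univ \ P).card = m → ∃ ω' t', St G k univ ω' t' by
    obtain ⟨ω', t', h'⟩ := h (univ \ (∅:Finset V)).card ∅ _ _ hinit rfl
    exact ⟨ω', t', h'⟩
  intro m
  induction m with
  | zero =>
    intro P ω t hSt hcard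
    have : univ ⊆ P := by
      intro a ha
      by_contra hc
      have : a ∈ univ \ P := Finset.mem_sdiff.mpr ⟨ha, hc⟩
      rw [Finset.card_eq_zero] at hcard
      rw [hcard] at this
      exact absurd this (Finset.notMem_empty a)
    have hPU : P = univ := le_antisymm (Finset.subset_univ P) this
    exact ⟨ω, t, hPU ▸ hSt⟩
  | succ n ih =>
    intro P ω t hSt hcard
    have hP : P ≠ univ := by
      intro hc
      rw [hc, Finset.sdiff_self] at hcard
      simp at hcard
    obtain ⟨v, hvP, ω', t', hSt'⟩ := step G k δ hk hδdeg hcnt hSt hP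
    apply ih (insert v P) ω' t' hSt'
    have : univ \ insert v P = (univ \ P).erase v := by
      ext a
      simp only [Finset.mem_sdiff, Finset.mem_insert, Finset.mem_erase, Finset.mem_univ,
        true_and]
      tauto
    rw [this, Finset.card_erase_of_mem (Finset.mem_sdiff.mpr ⟨Finset.mem_univ v, hvP⟩), hcard]
    omega
  
lemma final (k : ℕ) (hk : 0 < k) {ω : Sym2 V → ℤ} {t : V → ℤ}
    (hSt : St G k univ ω t) : G.IrregWith (5*k) := by
  classical
  refine ⟨fun e => (ω e).toNat, ?_, ?_⟩
  · intro e he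
    induction e with
    | _ a b =>
      rw [SimpleGraph.mem_edgeSet] at he
      obtain ⟨h1, h2⟩ := hSt.w_in he (Finset.mem_univ a) (Finset.mem_univ b)
      constructor
      · exact_mod_cast Int.le_toNat (by omega) |>.mpr (by exact_mod_cast h1)
      · have : ((ω s(a,b)).toNat : ℤ) ≤ 5*(k:ℤ) := by
          rw [Int.toNat_of_nonneg (by omega)]
          exact h2
        exact_mod_cast this
  · have hwd : ∀ w : V, (G.wdeg (fun e => (ω e).toNat) w : ℤ) = sig G ω w := by
      intro w
      unfold SimpleGraph.wdeg sig
      push_cast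
      refine Finset.sum_congr ?_ ?_
      · ext u
        simp [SimpleGraph.mem_neighborFinset]
      · intro u hu
        rw [SimpleGraph.mem_neighborFinset] at hu
        have := (hSt.w_in hu (Finset.mem_univ w) (Finset.mem_univ u)).1
        rw [Int.toNat_of_nonneg (by omega)]
    intro a b hab
    by_contra hne
    have hsig : sig G ω a = sig G ω b := by
      rw [← hwd a, ← hwd b, hab]
    obtain ⟨s1, s2, s3⟩ := hSt.t_sep a (Finset.mem_univ a) b (Finset.mem_univ b) hne
    rcases hSt.sig_mem a (Finset.mem_univ a) with h1 | h1 <;>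
      rcases hSt.sig_mem b (Finset.mem_univ b) with h2 | h2 <;>
      rw [h1, h2] at hsig
    · exact s1 hsig
    · exact s2 hsig
    · exact s3 hsig
    · exact s1 (by omega)

end Stmt11

lemma Stmt11.strength_eq_le {V : Type*} [Fintype V] (G : SimpleGraph V) {m : ℕ}
    (h1 : 1 ≤ m) (h : G.IrregWith m) :
    ∃ s : ℕ, G.strength = (s : ℕ∞) ∧ s ≤ m := by
  have hmem : (m : ℕ∞) ∈ {k : ℕ∞ | ∃ m' : ℕ, k = (m' : ℕ∞) ∧ 1 ≤ m' ∧ G.IrregWith m'} :=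
    ⟨m, rfl, h1, h⟩
  have hle : G.strength ≤ (m : ℕ∞) := sInf_le hmem
  have hne : G.strength ≠ ⊤ := by
    intro hc
    rw [hc] at hle
    exact absurd (top_le_iff.mp hle) (by simp)
  refine ⟨(G.strength).toNat, (ENat.coe_toNat hne).symm, ?_⟩
  have := ENat.toNat_le_toNat hle (by simp)
  simpa using this

theorem stmt11' {V : Type*} [Fintype V] (G : SimpleGraph V) [DecidableRel G.Adj]
    (hδ : 10 * (Fintype.card V : ℝ) ^ ((3 : ℝ) / 4) *
        (Real.log (Fintype.card V)) ^ ((1 : ℝ) / 4) ≤ (G.minDegree : ℝ)) :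
    ∃ s : ℕ, G.strength = (s : ℕ∞) ∧
      (s : ℝ) ≤ 48 * (Fintype.card V : ℝ) / (G.minDegree : ℝ) + 6 := by
  classical
  set n := Fintype.card V with hn
  set δ := G.minDegree with hδdef
  have hdivnn : (0:ℝ) ≤ 48 * (n : ℝ) / (δ : ℝ) := by positivity
  by_cases hsmall : n ≤ 1
  · -- trivial case
    have hsub : Subsingleton V := Fintype.card_le_one_iff_subsingleton.mp hsmall
    have hirr : G.IrregWith 1 := by
      refine ⟨fun _ => 1, fun e _ => ⟨le_refl 1, le_refl 1⟩, ?_⟩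
      intro a b _
      exact Subsingleton.elim a b
    obtain ⟨s, hs, hsle⟩ := Stmt11.strength_eq_le G (le_refl 1) hirr
    refine ⟨s, hs, ?_⟩
    have : (s:ℝ) ≤ 1 := by exact_mod_cast hsle
    linarith
  · -- main case
    push_neg at hsmall
    have hn2 : 2 ≤ n := hsmall
    have hVne : Nonempty V := by
      rw [← Fintype.card_pos_iff]
      omega
    obtain ⟨v0⟩ := hVne
    have hδn : δ < n := lt_of_le_of_lt (G.minDegree_le_degree v0) (G.degree_lt_card_verts v0)
    -- extract the quarter powers
    have hlogn : Real.log 2 ≤ Real.log n := by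
      apply Real.log_le_log (by norm_num)
      exact_mod_cast hn2
    have hlog2 : (0.6931 : ℝ) ≤ Real.log 2 := by
      have := Real.log_two_gt_d9
      linarith
    have hlogn0 : 0 ≤ Real.log n := le_trans (by linarith) hlogn
    have hnn0 : (0:ℝ) ≤ (n:ℝ) := by positivity
    have hX0 : (0:ℝ) ≤ 10 * (n : ℝ) ^ ((3 : ℝ) / 4) * (Real.log n) ^ ((1 : ℝ) / 4) := by
      positivity
    have hpow : (10 * (n : ℝ) ^ ((3 : ℝ) / 4) * (Real.log n) ^ ((1 : ℝ) / 4))^(4:ℕ)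
        ≤ ((δ:ℝ))^(4:ℕ) := by
      apply pow_le_pow_left₀ hX0 hδ
    have hlhs : (10 * (n : ℝ) ^ ((3 : ℝ) / 4) * (Real.log n) ^ ((1 : ℝ) / 4))^(4:ℕ)
        = 10000 * (n:ℝ)^(3:ℕ) * Real.log n := by
      rw [mul_pow, mul_pow]
      congr 1
      · congr 1
        · norm_num
        · rw [← Real.rpow_natCast ((n : ℝ) ^ ((3 : ℝ) / 4)) 4, ← Real.rpow_mul hnn0]
          norm_num
      · rw [← Real.rpow_natCast ((Real.log n) ^ ((1 : ℝ) / 4)) 4, ← Real.rpow_mul hlogn0]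
        norm_num
    have hd4 : 6931 * (n:ℝ)^(3:ℕ) ≤ ((δ:ℝ))^(4:ℕ) := by
      rw [hlhs] at hpow
      have h1 : 6931 * (n:ℝ)^(3:ℕ) ≤ 10000 * (n:ℝ)^(3:ℕ) * Real.log n := by
        have hp3 : (0:ℝ) ≤ (n:ℝ)^(3:ℕ) := by positivity
        have : (6931 : ℝ) ≤ 10000 * Real.log n := by nlinarith
        nlinarith
      linarith
    have hd4n : 6931 * n^3 ≤ δ^4 := by
      have : ((6931 * n^3 : ℕ) : ℝ) ≤ ((δ^4 : ℕ) : ℝ) := by push_cast; linarith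
      exact_mod_cast this
    have hn3 : 8 ≤ n^3 := by
      calc (8:ℕ) = 2^3 := by norm_num
      _ ≤ n^3 := Nat.pow_le_pow_left hn2 3
    have hδ0 : 0 < δ := by
      by_contra hc
      push_neg at hc
      interval_cases δ
      simp at hd4n
      omega
    have h83 : 83 * n ≤ δ^2 := by
      by_contra hc
      push_neg at hc
      have h3 : δ^2*δ^2 ≤ (83*n)*(83*n) := Nat.mul_le_mul (le_of_lt hc) (le_of_lt hc)
      have h5 : 6931 * n^3 ≤ 6889 * n^2 := by
        calc 6931*n^3 ≤ δ^4 := hd4n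
          _ = δ^2*δ^2 := by ring
          _ ≤ (83*n)*(83*n) := h3
          _ = 6889*n^2 := by ring
      have h7 : 6931*(n^2*n) ≤ 6889 * n^2 := by
        have h6 : n^3 = n^2*n := by ring
        rw [← h6]; exact h5
      have h8 : 6931*n^2*2 ≤ 6931*n^2*n := Nat.mul_le_mul_left _ hn2
      have h10 : 13862*(n^2) ≤ 6889*(n^2) := by
        calc 13862*(n^2) = 6931*n^2*2 := by ring
          _ ≤ 6931*n^2*n := h8
          _ = 6931*(n^2*n) := by ring
          _ ≤ 6889*(n^2) := h7
      have h11 : 0 < n^2 := by positivity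
      have h12 : (n^2)*13862 ≤ (n^2)*6889 := by
        calc (n^2)*13862 = 13862*(n^2) := by ring
          _ ≤ 6889*(n^2) := h10
          _ = (n^2)*6889 := by ring
      have := Nat.le_of_mul_le_mul_left h12 h11
      omega
    have hδ0 : 0 < δ := by
      rcases Nat.eq_zero_or_pos δ with h | h
      · exfalso
        rw [h] at hd4n
        norm_num at hd4n
        linarith [hn3]
      · exact h
    have hδ13 : 13 ≤ δ := by
      by_contra hc
      push_neg at hc
      have h1 : δ^2 ≤ 144 := by
        calc δ^2 ≤ 12^2 := Nat.pow_le_pow_left (by omega) 2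
          _ = 144 := by norm_num
      linarith [h83, hn2]
    -- set up the parameters
    set k : ℕ := 8 * n / δ + 1 with hkdef
    have hk0 : 0 < k := Nat.succ_pos _
    have h8nk : 8*n < k*δ := by
      have h1 : 8*n % δ < δ := Nat.mod_lt _ hδ0
      have h2 : 8*n/δ*δ + 8*n%δ = 8*n := by
        rw [mul_comm]
        exact Nat.div_add_mod _ _
      calc 8*n = 8*n/δ*δ + 8*n%δ := h2.symm
        _ < 8*n/δ*δ + δ := Nat.add_lt_add_left h1 _
        _ = (8*n/δ + 1)*δ := by ring
        _ = k*δ := by rw [hkdef]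
    have hA1 : 8*(n/k) < δ := by
      have a1 : 8*(n/k) ≤ 8*n/k := Nat.mul_div_le_mul_div_assoc 8 n k
      have a2 : 8*n/k < δ := by
        rw [Nat.div_lt_iff_lt_mul hk0, mul_comm δ k]
        exact h8nk
      omega
    have hδdeg : ∀ w : V, δ ≤ G.degree w := fun w => G.minDegree_le_degree w
    set R : ℕ := (Stmt11.roots G).card with hRdef
    have hR : R * (δ + 1) ≤ n := Stmt11.roots_card_bound G δ hδdeg
    have hA2 : 83 * R ≤ δ := by
      have b1 : R * δ ≤ n := by
        calc R * δ ≤ R * (δ+1) := Nat.mul_le_mul_left _ (by omega)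
          _ ≤ n := hR
      have b3 : (83*R)*δ ≤ δ*δ := by
        calc (83*R)*δ = 83*(R*δ) := by ring
          _ ≤ 83*n := Nat.mul_le_mul_left _ b1
          _ ≤ δ^2 := h83
          _ = δ*δ := by ring
      exact Nat.le_of_mul_le_mul_right b3 hδ0
    have hcnt : 3 * ((n / k + 1) + R) < δ := by
      have := hA1
      have := hA2
      have := hδ13
      linarith
    obtain ⟨ω, t, hSt⟩ := Stmt11.build G k δ hk0 hδdeg hcnt
    have hirr : G.IrregWith (5*k) := Stmt11.final G k hk0 hSt
    obtain ⟨s, hs, hsle⟩ := Stmt11.strength_eq_le G (by omega) hirr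
    refine ⟨s, hs, ?_⟩
    have hc1 : ((8*n/δ : ℕ) : ℝ) ≤ 8*(n:ℝ)/(δ:ℝ) := by
      have := Nat.cast_div_le (α := ℝ) (m := 8*n) (n := δ)
      push_cast at this
      convert this using 2
    have hδ0R : (0:ℝ) < (δ:ℝ) := by exact_mod_cast hδ0
    have hndR : (0:ℝ) ≤ (n:ℝ)/(δ:ℝ) := by positivity
    have hs5k : (s:ℝ) ≤ 5*((8*n/δ : ℕ):ℝ) + 5 := by
      have : (s:ℝ) ≤ ((5*k : ℕ):ℝ) := by exact_mod_cast hsle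
      rw [hkdef] at this
      push_cast at this
      linarith
    calc (s:ℝ) ≤ 5*((8*n/δ : ℕ):ℝ) + 5 := hs5k
      _ ≤ 5*(8*(n:ℝ)/(δ:ℝ)) + 5 := by linarith
      _ = 40*((n:ℝ)/(δ:ℝ)) + 5 := by ring
      _ ≤ 48*((n:ℝ)/(δ:ℝ)) + 6 := by linarith
      _ = 48*(n:ℝ)/(δ:ℝ) + 6 := by ring


/-- Cuckler, Lazebnik. Every finite simple graph `G` of order `n` with
minimum degree `δ(G) ≥ 10·n^{3/4}·(ln n)^{1/4}` satisfies `s(G) ≤ 48·n/δ(G) + 6`. -/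
theorem stmt11 {V : Type*} [Fintype V] (G : SimpleGraph V) [DecidableRel G.Adj]
    (hδ : 10 * (Fintype.card V : ℝ) ^ ((3 : ℝ) / 4) *
        (Real.log (Fintype.card V)) ^ ((1 : ℝ) / 4) ≤ (G.minDegree : ℝ)) :
    ∃ s : ℕ, G.strength = (s : ℕ∞) ∧
      (s : ℝ) ≤ 48 * (Fintype.card V : ℝ) / (G.minDegree : ℝ) + 6 := by
  exact stmt11' G hδ
end

section
/- Let G = (V,E) be a finite simple graph, let V = B ∪ S be a partition of its vertex set, and let M ⊆ E be a set of edges each of which joins a vertex of B to a vertex of S. Let ω_0 : E → ℤ_{>0} be an edge weighting with vertex sums σ_0(v) = Σ_{u ∈ N(v)} ω_0(uv). Let λ ≥ 3 and L ≥ 1 be integers, let a be an integer, and for j = 1, 2, …, J let I_j denote the interval of integers [a + (j−1)L, a + jL). Suppose that: (i) for every v ∈ B there is some j ≤ J − 1 with σ_0(v) ∈ I_j; (ii) every v ∈ B is incident to at least 2L edges of M; and (iii) for every j ≤ J − 1, the number of vertices v ∈ B with σ_0(v) ∈ I_j is at most the number of integers in I_{j+1} that are congruent to neither 0 nor 1 modulo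 λ. Then there exists a weighting ω_1 : E → ℤ_{>0} with ω_1(e) = ω_0(e) for every e ∉ M and ω_1(e) ∈ {ω_0(e), ω_0(e)+1} for every e ∈ M, such that the new sums σ_1(v) for v ∈ B are pairwise distinct, none of them is congruent to 0 or 1 modulo λ, and σ_0(v) ∈ I_j implies σ_1(v) ∈ I_{j+1} for every v ∈ B. -/
open Finset

lemma my_exists_injOn_of_card_le {α β : Type*} [DecidableEq α] [Nonempty β]
    (s : Finset α) (t : Finset β) (h : s.card ≤ t.card) :
    ∃ f : α → β, Set.InjOn f s ∧ ∀ a ∈ s, f a ∈ t := by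
  classical
  refine ⟨fun a => if h' : a ∈ s then (t.equivFin.symm (Fin.castLE h (s.equivFin ⟨a, h'⟩)) : β)
      else Classical.choice ‹Nonempty β›, ?_, ?_⟩
  · intro a ha b hb hab
    simp only [Finset.mem_coe] at ha hb
    simp only [dif_pos ha, dif_pos hb] at hab
    have := Subtype.coe_injective hab
    have := t.equivFin.symm.injective this
    have := Fin.castLE_injective h this
    have := s.equivFin.injective this
    exact congrArg Subtype.val this
  · intro a ha
    simp only [dif_pos ha]
    exact (t.equivFin.symm _).2

/-- the greedy adjustment lemma for sums in `B`. -/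
theorem stmt17 {V : Type*} [Fintype V] [DecidableEq V]
    (G : SimpleGraph V) [DecidableRel G.Adj]
    (B S : Finset V) (hBS : B ∪ S = Finset.univ) (hdisj : Disjoint B S)
    (M : Finset (Sym2 V)) (hME : M ⊆ G.edgeFinset)
    (hMBS : ∀ u v : V, s(u, v) ∈ M → (u ∈ B ∧ v ∈ S) ∨ (u ∈ S ∧ v ∈ B))
    (ω₀ : Sym2 V → ℕ) (hω₀ : ∀ e ∈ G.edgeFinset, 1 ≤ ω₀ e)
    (lam : ℕ) (hlam : 3 ≤ lam) (L : ℕ) (hL : 1 ≤ L) (a : ℤ) (J : ℕ)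
    (σ₀ : V → ℤ) (hσ₀ : ∀ v : V, σ₀ v = ∑ u ∈ G.neighborFinset v, (ω₀ s(v, u) : ℤ))
    (I : ℕ → Finset ℤ) (hI : ∀ j : ℕ, I j = Finset.Ico (a + ((j : ℤ) - 1) * L) (a + (j : ℤ) * L))
    (h1 : ∀ v ∈ B, ∃ j : ℕ, 1 ≤ j ∧ j ≤ J - 1 ∧ σ₀ v ∈ I j)
    (h2 : ∀ v ∈ B, 2 * L ≤ (M.filter (fun e => v ∈ e)).card)
    (h3 : ∀ j : ℕ, 1 ≤ j → j ≤ J - 1 →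
      (B.filter (fun v => σ₀ v ∈ I j)).card ≤
        ((I (j + 1)).filter (fun m => m % (lam : ℤ) ≠ 0 ∧ m % (lam : ℤ) ≠ 1)).card) :
    ∃ ω₁ : Sym2 V → ℕ,
      (∀ e : Sym2 V, e ∉ M → ω₁ e = ω₀ e) ∧
      (∀ e ∈ M, ω₁ e = ω₀ e ∨ ω₁ e = ω₀ e + 1) ∧
      Set.InjOn (fun v => ∑ u ∈ G.neighborFinset v, (ω₁ s(v, u) : ℤ)) (B : Set V) ∧
      (∀ v ∈ B, (∑ u ∈ G.neighborFinset v, (ω₁ s(v, u) : ℤ)) % (lam : ℤ) ≠ 0 ∧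
        (∑ u ∈ G.neighborFinset v, (ω₁ s(v, u) : ℤ)) % (lam : ℤ) ≠ 1) ∧
      (∀ v ∈ B, ∀ j : ℕ, 1 ≤ j → j ≤ J - 1 → σ₀ v ∈ I j →
        (∑ u ∈ G.neighborFinset v, (ω₁ s(v, u) : ℤ)) ∈ I (j + 1)) := by
  classical
  have hLZ : (1 : ℤ) ≤ (L : ℤ) := by exact_mod_cast hL
  -- the intervals are pairwise disjoint
  have hIdisj : ∀ (j j' : ℕ) (x : ℤ), x ∈ I j → x ∈ I j' → j = j' := by
    intro j j' x hj hj'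
    rw [hI, Finset.mem_Ico] at hj hj'
    by_contra hne
    rcases Nat.lt_or_ge j j' with h | h
    · have hc : (j : ℤ) + 1 ≤ (j' : ℤ) := by exact_mod_cast h
      nlinarith [hj.2, hj'.1]
    · have h' : j' < j := lt_of_le_of_ne h (Ne.symm hne)
      have hc : (j' : ℤ) + 1 ≤ (j : ℤ) := by exact_mod_cast h'
      nlinarith [hj'.2, hj.1]
  set T : ℕ → Finset ℤ :=
    fun j => (I (j + 1)).filter (fun m => m % (lam : ℤ) ≠ 0 ∧ m % (lam : ℤ) ≠ 1) with hT
  set Bj : ℕ → Finset V := fun j => B.filter (fun v => σ₀ v ∈ I j) with hBj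
  -- choose injective targets in each interval
  have hf : ∀ j : ℕ, ∃ f : V → ℤ,
      (1 ≤ j → j ≤ J - 1 → Set.InjOn f (Bj j) ∧ ∀ v ∈ Bj j, f v ∈ T j) := by
    intro j
    by_cases hjc : 1 ≤ j ∧ j ≤ J - 1
    · obtain ⟨f, h1f, h2f⟩ := my_exists_injOn_of_card_le (Bj j) (T j) (h3 j hjc.1 hjc.2)
      exact ⟨f, fun _ _ => ⟨h1f, h2f⟩⟩
    · exact ⟨fun _ => 0, fun ha hb => absurd ⟨ha, hb⟩ hjc⟩
  choose f hfspec using hf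
  -- choose the interval index for each vertex of B
  have h1' : ∀ v : V, ∃ j : ℕ, v ∈ B → (1 ≤ j ∧ j ≤ J - 1 ∧ σ₀ v ∈ I j) := by
    intro v
    by_cases hv : v ∈ B
    · obtain ⟨j, hj⟩ := h1 v hv
      exact ⟨j, fun _ => hj⟩
    · exact ⟨1, fun h => absurd h hv⟩
  choose jv hjv using h1'
  set t : V → ℤ := fun v => f (jv v) v with ht
  have hvBj : ∀ v ∈ B, v ∈ Bj (jv v) := by
    intro v hv
    rw [hBj]
    exact Finset.mem_filter.mpr ⟨hv, (hjv v hv).2.2⟩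
  have htT : ∀ v ∈ B, t v ∈ T (jv v) := fun v hv =>
    ((hfspec (jv v)) (hjv v hv).1 (hjv v hv).2.1).2 v (hvBj v hv)
  have htI : ∀ v ∈ B, t v ∈ I (jv v + 1) := fun v hv =>
    (Finset.mem_filter.mp (htT v hv)).1
  -- the increments
  set δ : V → ℕ := fun v => (t v - σ₀ v).toNat with hδdef
  have hδ : ∀ v ∈ B, 1 ≤ δ v ∧ ((δ v : ℤ) = t v - σ₀ v) ∧ δ v ≤ 2 * L := by
    intro v hv
    have h₁ := (hjv v hv).2.2
    have h₂ := htI v hv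
    rw [hI, Finset.mem_Ico] at h₁ h₂
    push_cast at h₂
    have hge : (1 : ℤ) ≤ t v - σ₀ v := by linarith [h₁.2, h₂.1]
    have hle : t v - σ₀ v ≤ 2 * L := by nlinarith [h₁.1, h₂.2]
    refine ⟨?_, ?_, ?_⟩
    · simpa using Int.toNat_le_toNat hge
    · exact Int.toNat_of_nonneg (by linarith)
    · have : ((t v - σ₀ v).toNat : ℤ) ≤ 2 * L := by
        rw [Int.toNat_of_nonneg (by linarith)]; exact hle
      exact_mod_cast this
  -- choose the edge sets to increment
  have hF : ∀ v : V, ∃ s : Finset (Sym2 V),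
      v ∈ B → (s ⊆ M.filter (fun e => v ∈ e) ∧ s.card = δ v) := by
    intro v
    by_cases hv : v ∈ B
    · obtain ⟨s, hs1, hs2⟩ := Finset.exists_subset_card_eq (s := M.filter (fun e => v ∈ e)) (n := δ v)
        (le_trans (hδ v hv).2.2 (h2 v hv))
      exact ⟨s, fun _ => ⟨hs1, hs2⟩⟩
    · exact ⟨∅, fun h => absurd h hv⟩
  choose F hFspec using hF
  set ω₁ : Sym2 V → ℕ := fun e => ω₀ e + (if e ∈ B.biUnion F then 1 else 0) with hω₁
  have hbiM : ∀ e ∈ B.biUnion F, e ∈ M := by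
    intro e he
    obtain ⟨w, hw, hew⟩ := Finset.mem_biUnion.mp he
    exact (Finset.mem_filter.mp ((hFspec w hw).1 hew)).1
  -- the key sum computation
  have hsum : ∀ v ∈ B, (∑ u ∈ G.neighborFinset v, (ω₁ s(v, u) : ℤ)) = t v := by
    intro v hv
    have hstep : ∀ u ∈ G.neighborFinset v,
        ((ω₁ s(v, u) : ℕ) : ℤ)
          = (ω₀ s(v, u) : ℤ) + (if s(v, u) ∈ F v then 1 else 0) := by
      intro u hu
      have hiff : s(v, u) ∈ B.biUnion F ↔ s(v, u) ∈ F v := by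
        constructor
        · intro he
          obtain ⟨w, hw, hew⟩ := Finset.mem_biUnion.mp he
          have hwe : w ∈ s(v, u) := (Finset.mem_filter.mp ((hFspec w hw).1 hew)).2
          have hMe : s(v, u) ∈ M := (Finset.mem_filter.mp ((hFspec w hw).1 hew)).1
          rcases Sym2.mem_iff.mp hwe with rfl | rfl
          · exact hew
          · exfalso
            rcases hMBS v w hMe with ⟨hv', hw'⟩ | ⟨hv', hw'⟩
            · exact (Finset.disjoint_left.mp hdisj hw) hw'
            · exact (Finset.disjoint_left.mp hdisj hv) hv'
        · intro he
          exact Finset.mem_biUnion.mpr ⟨v, hv, he⟩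
      rw [hω₁]
      simp only [hiff]
      push_cast
      ring
    rw [Finset.sum_congr rfl hstep, Finset.sum_add_distrib, ← hσ₀, Finset.sum_boole]
    have hcard : ((G.neighborFinset v).filter (fun u => s(v, u) ∈ F v)).card = (F v).card := by
      apply Finset.card_nbij (fun u => s(v, u))
      · intro u hu
        exact (Finset.mem_filter.mp hu).2
      · intro x hx y hy hxy
        exact Sym2.congr_right.mp hxy
      · intro e he
        simp only [Finset.coe_filter, Set.mem_setOf_eq, Set.mem_image] at he ⊢
        have heM : e ∈ M.filter (fun e => v ∈ e) := (hFspec v hv).1 he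
        have heE : e ∈ G.edgeFinset := hME (Finset.mem_filter.mp heM).1
        have hve : v ∈ e := (Finset.mem_filter.mp heM).2
        induction e using Sym2.ind with
        | _ x y =>
          rw [SimpleGraph.mem_edgeFinset, SimpleGraph.mem_edgeSet] at heE
          rcases Sym2.mem_iff.mp hve with rfl | rfl
          · exact ⟨y, ⟨(G.mem_neighborFinset v y).mpr heE, he⟩, rfl⟩
          · refine ⟨x, ⟨(G.mem_neighborFinset v x).mpr heE.symm, ?_⟩, Sym2.eq_swap⟩
            rwa [Sym2.eq_swap]
    rw [hcard, (hFspec v hv).2, (hδ v hv).2.1]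
    ring
  -- assemble the conclusion
  refine ⟨ω₁, ?_, ?_, ?_, ?_, ?_⟩
  · intro e heM
    rw [hω₁]
    simp only [if_neg (fun h => heM (hbiM e h)), add_zero]
  · intro e _
    by_cases h : e ∈ B.biUnion F
    · right
      show ω₀ e + (if e ∈ B.biUnion F then 1 else 0) = ω₀ e + 1
      rw [if_pos h]
    · left
      show ω₀ e + (if e ∈ B.biUnion F then 1 else 0) = ω₀ e
      rw [if_neg h, add_zero]
  · intro v hv w hw hvw
    simp only [Finset.mem_coe] at hv hw
    simp only at hvw
    rw [hsum v hv, hsum w hw] at hvw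
    have hj : jv v + 1 = jv w + 1 :=
      hIdisj _ _ (t v) (htI v hv) (hvw ▸ htI w hw)
    have hj' : jv v = jv w := by omega
    have hinj := ((hfspec (jv v)) (hjv v hv).1 (hjv v hv).2.1).1
    have hw' : w ∈ Bj (jv v) := hj' ▸ hvBj w hw
    have hvw' : f (jv v) v = f (jv w) w := hvw
    rw [← hj'] at hvw'
    exact hinj (by exact_mod_cast hvBj v hv) (by exact_mod_cast hw') hvw'
  · intro v hv
    rw [hsum v hv]
    exact (Finset.mem_filter.mp (htT v hv)).2
  · intro v hv j hj1 hj2 hjI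
    rw [hsum v hv]
    have : j = jv v := hIdisj _ _ (σ₀ v) hjI (hjv v hv).2.2
    rw [this]
    exact htI v hv
end

section
/- For a finite simple graph G on at least one vertex, s(G) < +∞ if and only if G is good, i.e., if and only if G has no component isomorphic to K_2 and at most one isolated vertex. -/
open Finset

/-- A finite simple graph is *good* if it has no component isomorphic to `K₂`
(equivalently, no edge both of whose endpoints have degree `1`) and at most one
isolated vertex. -/
def SimpleGraph.IsGood {V : Type*} [Fintype V] (G : SimpleGraph V) [DecidableRel G.Adj] : Prop :=
  (∀ u v : V, G.Adj u v → ¬(G.degree u = 1 ∧ G.degree v = 1)) ∧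
  ({v : V | G.degree v = 0} : Set V).Subsingleton

lemma SimpleGraph.wdeg_eq {V : Type*} [Fintype V] (G : SimpleGraph V)
    [DecidableRel G.Adj] (ω : Sym2 V → ℕ) (v : V) :
    G.wdeg ω v = ∑ u ∈ G.neighborFinset v, ω s(v, u) := by
  rw [SimpleGraph.wdeg]
  apply Finset.sum_congr
  · ext x; simp [SimpleGraph.mem_neighborFinset]
  · intros; rfl

lemma SimpleGraph.wdeg_eq_sum_image {V : Type*} [Fintype V] [DecidableEq (Sym2 V)]
    (G : SimpleGraph V) [DecidableRel G.Adj] (ω : Sym2 V → ℕ) (v : V) :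
    G.wdeg ω v = ∑ e ∈ (G.neighborFinset v).image (fun u => s(v, u)), ω e := by
  rw [SimpleGraph.wdeg_eq, Finset.sum_image]
  intro a _ b _ h
  exact Sym2.congr_right.mp h

/-- For a finite simple graph `G` on at least one vertex, `s(G) < +∞` if and
only if `G` is good, i.e. iff `G` has no component isomorphic to `K₂` and at most one isolated
vertex. -/
theorem stmt18 {V : Type*} [Fintype V] [Nonempty V]
    (G : SimpleGraph V) [DecidableRel G.Adj] :
    G.strength ≠ (⊤ : ℕ∞) ↔ G.IsGood := by
  classical
  constructor
  · -- finite strength implies good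
    intro h
    have hne : {k : ℕ∞ | ∃ m : ℕ, k = (m : ℕ∞) ∧ 1 ≤ m ∧ G.IrregWith m}.Nonempty := by
      by_contra hcon
      rw [Set.not_nonempty_iff_eq_empty] at hcon
      exact h (by simp [SimpleGraph.strength, hcon])
    obtain ⟨k, m, rfl, hm1, ω, hbd, hinj⟩ := hne
    constructor
    · rintro u v huv ⟨hdu, hdv⟩
      have hu : G.neighborFinset u = {v} := by
        have h1 : (G.neighborFinset u).card = 1 := hdu
        obtain ⟨a, ha⟩ := Finset.card_eq_one.mp h1
        have hv : v ∈ G.neighborFinset u := by simp [huv]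
        rw [ha] at hv ⊢
        simp_all
      have hv : G.neighborFinset v = {u} := by
        have h1 : (G.neighborFinset v).card = 1 := hdv
        obtain ⟨a, ha⟩ := Finset.card_eq_one.mp h1
        have hu' : u ∈ G.neighborFinset v := by simp [huv.symm]
        rw [ha] at hu' ⊢
        simp_all
      have e1 : G.wdeg ω u = ω s(u, v) := by
        rw [SimpleGraph.wdeg_eq, hu, Finset.sum_singleton]
      have e2 : G.wdeg ω v = ω s(v, u) := by
        rw [SimpleGraph.wdeg_eq, hv, Finset.sum_singleton]
      have : G.wdeg ω u = G.wdeg ω v := by rw [e1, e2, Sym2.eq_swap]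
      exact G.ne_of_adj huv (hinj this)
    · intro u hu v hv
      simp only [Set.mem_setOf_eq] at hu hv
      have hz : ∀ w : V, G.degree w = 0 → G.wdeg ω w = 0 := by
        intro w hw
        rw [SimpleGraph.wdeg_eq]
        have : G.neighborFinset w = ∅ := Finset.card_eq_zero.mp hw
        simp [this]
      exact hinj ((hz u hu).trans (hz v hv).symm)
  · -- good implies finite strength
    rintro ⟨hK2, hiso⟩
    set idx : Sym2 V → ℕ := fun e => ((Fintype.equivFin (Sym2 V)) e : ℕ) with hidx
    have idx_inj : Function.Injective idx := by
      intro a b h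
      exact (Fintype.equivFin (Sym2 V)).injective (Fin.ext h)
    set ω : Sym2 V → ℕ := fun e => 2 ^ idx e with hω
    set m : ℕ := 2 ^ Fintype.card (Sym2 V) with hm
    have hmember : (m : ℕ∞) ∈ {k : ℕ∞ | ∃ m : ℕ, k = (m : ℕ∞) ∧ 1 ≤ m ∧ G.IrregWith m} := by
      refine ⟨m, rfl, Nat.one_le_two_pow, ω, ?_, ?_⟩
      · intro e _
        refine ⟨Nat.one_le_two_pow, ?_⟩
        exact Nat.pow_le_pow_right (by norm_num) (le_of_lt ((Fintype.equivFin (Sym2 V)) e).isLt)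
      · -- injectivity of weighted degrees
        intro u v huv
        by_contra hne
        have key : ∀ w : V,
            G.wdeg ω w = ∑ i ∈ ((G.neighborFinset w).image (fun x => s(w, x))).image idx,
              2 ^ i := by
          intro w
          rw [SimpleGraph.wdeg_eq_sum_image, Finset.sum_image (fun a _ b _ h => idx_inj h)]
        rw [key u, key v] at huv
        have himg : ((G.neighborFinset u).image (fun x => s(u, x))).image idx =
            ((G.neighborFinset v).image (fun x => s(v, x))).image idx := by
          have := congrArg (fun n : ℕ => n.bitIndices.toFinset) huv
          simpa using this
        have hT : (G.neighborFinset u).image (fun x => s(u, x)) =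
            (G.neighborFinset v).image (fun x => s(v, x)) :=
          Finset.image_injective idx_inj himg
        rcases Finset.eq_empty_or_nonempty
            ((G.neighborFinset u).image (fun x => s(u, x))) with he | hne'
        · -- both isolated
          have hdu : G.degree u = 0 := by
            rw [Finset.image_eq_empty] at he
            simp [SimpleGraph.degree, he]
          have hdv : G.degree v = 0 := by
            rw [hT, Finset.image_eq_empty] at he
            simp [SimpleGraph.degree, he]
          exact hne (hiso hdu hdv)
        · -- both have degree one and are adjacent: a K₂ component
          obtain ⟨e, he⟩ := hne'
          have he' := he
          rw [hT] at he'
          simp only [Finset.mem_image, SimpleGraph.mem_neighborFinset] at he he'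
          obtain ⟨a, hva, hea⟩ := he
          obtain ⟨b, hub, heb⟩ := he'
          have hsv : s(u, a) = s(v, b) := hea.trans heb.symm
          rw [Sym2.eq_iff] at hsv
          have hadj : G.Adj u v := by
            rcases hsv with ⟨h1, _⟩ | ⟨h1, h2⟩
            · exact absurd h1 hne
            · rwa [← h2]
          have hNu : G.neighborFinset u = {v} := by
            apply Finset.eq_singleton_iff_unique_mem.mpr
            refine ⟨by simp [hadj], ?_⟩
            intro x hx
            rw [SimpleGraph.mem_neighborFinset] at hx
            have hx' : s(u, x) ∈ (G.neighborFinset v).image (fun y => s(v, y)) := by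
              rw [← hT]
              exact Finset.mem_image.mpr ⟨x, by simp [hx], rfl⟩
            simp only [Finset.mem_image, SimpleGraph.mem_neighborFinset] at hx'
            obtain ⟨c, _, hc⟩ := hx'
            rw [Sym2.eq_iff] at hc
            rcases hc with ⟨h1, _⟩ | ⟨h1, _⟩
            · exact absurd h1.symm hne
            · exact h1.symm
          have hNv : G.neighborFinset v = {u} := by
            apply Finset.eq_singleton_iff_unique_mem.mpr
            refine ⟨by simp [hadj.symm], ?_⟩
            intro x hx
            rw [SimpleGraph.mem_neighborFinset] at hx
            have hx' : s(v, x) ∈ (G.neighborFinset u).image (fun y => s(u, y)) := by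
              rw [hT]
              exact Finset.mem_image.mpr ⟨x, by simp [hx], rfl⟩
            simp only [Finset.mem_image, SimpleGraph.mem_neighborFinset] at hx'
            obtain ⟨c, _, hc⟩ := hx'
            rw [Sym2.eq_iff] at hc
            rcases hc with ⟨h1, _⟩ | ⟨h1, _⟩
            · exact absurd h1 hne
            · exact h1.symm
          exact hK2 u v hadj ⟨by simp [SimpleGraph.degree, hNu],
            by simp [SimpleGraph.degree, hNv]⟩
    intro htop
    have : G.strength ≤ (m : ℕ∞) := sInf_le hmember
    rw [htop] at this
    exact (not_le.mpr (WithTop.coe_lt_top m)) this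
end
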